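/- arXiv:1010.2875 — 5 statements merged into one kernel-verified Lean document; each statement's English description precedes it below -/
import Mathlib

section
/- Let k ≥ 1, let x_1, …, x_k ∈ F be pairwise distinct, let y_1, …, y_k ∈ F be arbitrary, and let z ∈ F satisfy z + x_i ≠ 0 for all i. Then ∑_{i=1}^{k} ∏_{j=1}^{k} (x_i + y_j) / [ (z + x_i) · ∏_{i'≠i} (x_i − x_{i'}) ] = 1 − ∏_{j=1}^{k} (z − y_j) / ∏_{i=1}^{k} (z + x_i). -/
/-!
Adjoin `-z` to the nodes `x₁, …, x_k`. The monic polynomial `P t = ∏ⱼ (t + yⱼ)` has degree `k`,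
one less than the number of nodes, so by Lagrange interpolation its leading coefficient `1` is
`∑ P(v) / ∏_{v' ≠ v} (v - v')` over all `k + 1` nodes `v`. The term of the node `-z` is
`∏ⱼ (z - yⱼ) / ∏ᵢ (z + xᵢ)`, the signs cancelling in pairs, and the other terms form the left-hand
side.
-/

open Finset Polynomial

namespace Lagrange

variable {F ι : Type*} [Field F] [Fintype ι] [DecidableEq ι]

theorem leadingCoeff_eq_div_add_sum_of_notMem_range {x : ι → F} (hx : Function.Injective x)
    {w : F} (hw : ∀ i, w ≠ x i) {P : F[X]} (hP : P.degree = Fintype.card ι) :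
    P.leadingCoeff = P.eval w / ∏ i, (w - x i) +
      ∑ i, P.eval (x i) / ((x i - w) * ∏ j ∈ univ.erase i, (x i - x j)) := by
  set v : Option ι → F := fun o => o.elim w x
  have hv : Function.Injective v := by
    rintro (_ | a) (_ | b) h
    · rfl
    · exact absurd h (hw b)
    · exact absurd h.symm (hw a)
    · exact congrArg some (hx h)
  rw [leadingCoeff_eq_sum (s := univ) hv.injOn (by simp [hP]), Fintype.sum_option]
  have h_none : (univ : Finset (Option ι)).erase none = univ.map Function.Embedding.some := by
    ext (_ | _) <;> simp
  have h_some : ∀ i, (univ : Finset (Option ι)).erase (some i) = insertNone (univ.erase i) := by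
    intro i
    ext (_ | _) <;> simp
  simp [h_none, h_some, v]

end Lagrange

theorem Finset.prod_neg_div_prod_neg {F ι : Type*} [Field F] (s : Finset ι) (f g : ι → F) :
    (∏ i ∈ s, -f i) / ∏ i ∈ s, -g i = (∏ i ∈ s, f i) / ∏ i ∈ s, g i := by
  rw [prod_neg, prod_neg, mul_div_mul_left _ _ (pow_ne_zero _ (neg_ne_zero.mpr one_ne_zero))]

theorem stmt1_general {F : Type*} [Field F] (k : ℕ)
    (x : Fin k → F) (hx : Function.Injective x)
    (y : Fin k → F) (z : F) (hz : ∀ i, z + x i ≠ 0) :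
    ∑ i : Fin k,
      (∏ j : Fin k, (x i + y j)) /
        ((z + x i) * ∏ i' ∈ Finset.univ.erase i, (x i - x i')) =
      1 - (∏ j : Fin k, (z - y j)) / ∏ i : Fin k, (z + x i) := by
  have hmonic : (∏ j, (X + C (y j))).Monic :=
    monic_prod_of_monic _ _ fun j _ => monic_X_add_C (y j)
  have hdeg : (∏ j, (X + C (y j))).degree = (Fintype.card (Fin k) : WithBot ℕ) := by
    rw [degree_prod]
    simp
  have key := Lagrange.leadingCoeff_eq_div_add_sum_of_notMem_range hx (w := -z)
    (fun i h => hz i (by rw [← h]; ring)) hdeg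
  have h_node : (∏ j, (-z + y j)) / ∏ i, (-z - x i) = (∏ j, (z - y j)) / ∏ i, (z + x i) := by
    rw [← prod_neg_div_prod_neg]
    congr! 2 <;> ring
  simp only [hmonic.leadingCoeff, eval_prod, eval_add, eval_X, eval_C, h_node,
    sub_neg_eq_add, add_comm _ z] at key
  rw [key, add_sub_cancel_left]

/-- **Lagrange-type summation identity** (Lemma 5.18 (2) of the paper).
For pairwise distinct `x₁, …, x_k` in a field `F`, arbitrary `y₁, …, y_k`, and `z` with
`z + xᵢ ≠ 0` for all `i`:
`∑ᵢ ∏ⱼ (xᵢ + yⱼ) / ((z + xᵢ) ∏_{i'≠i} (xᵢ − x_{i'})) = 1 − ∏ⱼ (z − yⱼ) / ∏ᵢ (z + xᵢ)`. -/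
theorem stmt1 {F : Type*} [Field F] (k : ℕ) (hk : 1 ≤ k)
    (x : Fin k → F) (hx : Function.Injective x)
    (y : Fin k → F) (z : F) (hz : ∀ i, z + x i ≠ 0) :
    ∑ i : Fin k,
      (∏ j : Fin k, (x i + y j)) /
        ((z + x i) * ∏ i' ∈ Finset.univ.erase i, (x i - x i')) =
      1 - (∏ j : Fin k, (z - y j)) / ∏ i : Fin k, (z + x i) :=
  stmt1_general k x hx y z hz
end

section
/- For every Q ∈ GT(λ) and every integer k with 1 ≤ |k| ≤ n, the shifted array σ_{2n−1,k}Q belongs to GT(λ + e_k) if and only if one of the following holds: (a) k = 1; (b) 2 ≤ k ≤ n−1 and q_{2n−2,k−1} > λ_k; (c) k = −sgn(λ_n)·n; (d) −(n−1) ≤ k ≤ −1 and q_{2n−2,−k} < λ_{−k}; (e) k = sgn(λ_n)·n and q_{2n−2,n−1} > |λ_n|. -/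
/-- `σ_{a,b}`: add `sgn b` to the entry at row `a`, column `|b|` (no change if `b = 0`). -/
def gtShift (a : ℕ) (b : ℤ) (q : ℕ → ℕ → ℚ) : ℕ → ℕ → ℚ :=
  fun i j => if i = a ∧ j = b.natAbs ∧ b ≠ 0 then q i j + (b.sign : ℚ) else q i j

/-- `λ + e_b` (with `e_{-k} := -e_k`): add `sgn b` to the `|b|`-th entry of `λ`. -/
def lamShift (b : ℤ) (lam : ℕ → ℚ) : ℕ → ℚ :=
  fun j => if j = b.natAbs ∧ b ≠ 0 then lam j + (b.sign : ℚ) else lam j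

/-- `Q = (q_{i,j})_{1 ≤ i ≤ 2n−1, 1 ≤ j ≤ ⌊(i+1)/2⌋}` is a `λ`-Gelfand–Tsetlin pattern. -/
def IsGTPattern (n : ℕ) (lam : ℕ → ℚ) (q : ℕ → ℕ → ℚ) : Prop :=
  ((∀ i j, 1 ≤ i → i ≤ 2 * n - 1 → 1 ≤ j → j ≤ (i + 1) / 2 → ∃ m : ℤ, q i j = (m : ℚ)) ∨
   (∀ i j, 1 ≤ i → i ≤ 2 * n - 1 → 1 ≤ j → j ≤ (i + 1) / 2 →
      ∃ m : ℤ, q i j = (m : ℚ) + 1 / 2)) ∧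
  (∀ i, 1 ≤ i → i ≤ n - 1 →
    (∀ j, 1 ≤ j → j ≤ i - 1 →
      q (2 * i + 1) j ≥ q (2 * i) j ∧ q (2 * i) j ≥ q (2 * i + 1) (j + 1)) ∧
    (q (2 * i + 1) i ≥ q (2 * i) i ∧ q (2 * i) i ≥ |q (2 * i + 1) (i + 1)|) ∧
    (∀ j, 1 ≤ j → j ≤ i - 1 →
      q (2 * i) j ≥ q (2 * i - 1) j ∧ q (2 * i - 1) j ≥ q (2 * i) (j + 1)) ∧
    (q (2 * i) i ≥ q (2 * i - 1) i ∧ q (2 * i - 1) i ≥ -(q (2 * i) i))) ∧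
  (∀ j, 1 ≤ j → j ≤ n → q (2 * n - 1) j = lam j)

/-- `sgn x = 1` if `x > 0` and `−1` if `x < 0` (for the relevant `x ≠ 0`). -/
def sgnq (x : ℚ) : ℤ := if 0 < x then 1 else -1

private lemma gapQ {a b : ℚ} (h : ∃ p : ℤ, a - b = p) : b < a ↔ b + 1 ≤ a := by
  obtain ⟨p, hp⟩ := h
  constructor
  · intro h1
    have hp0 : (0:ℚ) < p := by rw [← hp]; linarith
    have h2 : (0:ℤ) < p := by exact_mod_cast hp0
    have h3 : (1:ℤ) ≤ p := h2
    have h4 : (1:ℚ) ≤ p := by exact_mod_cast h3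
    linarith
  · intro h1; linarith

private lemma halfneg {x : ℚ} (h : ∃ p : ℤ, 2 * x = p) (hx : x < 0) : x ≤ -(1/2) := by
  obtain ⟨p, hp⟩ := h
  have h1 : (p:ℚ) < 0 := by rw [← hp]; linarith
  have h2 : p < 0 := by exact_mod_cast h1
  have h3 : p ≤ -1 := by omega
  have h4 : (p:ℚ) ≤ -1 := by exact_mod_cast h3
  linarith

private lemma halfpos {x : ℚ} (h : ∃ p : ℤ, 2 * x = p) (hx : 0 < x) : 1/2 ≤ x := by
  obtain ⟨p, hp⟩ := h
  have h1 : (0:ℚ) < p := by rw [← hp]; linarith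
  have h2 : 0 < p := by exact_mod_cast h1
  have h3 : 1 ≤ p := by omega
  have h4 : (1:ℚ) ≤ p := by exact_mod_cast h3
  linarith

/-- **Lemma 5.5 (1) of the paper.**  For `Q ∈ GT(λ)` and `1 ≤ |k| ≤ n`, one has
`σ_{2n−1,k} Q ∈ GT(λ + e_k)` iff one of the conditions (a)–(e) holds. -/
theorem stmt2 (n : ℕ) (hn : 2 ≤ n) (lam : ℕ → ℚ)
    (hint : (∀ j, 1 ≤ j → j ≤ n → ∃ m : ℤ, lam j = (m : ℚ)) ∨
            (∀ j, 1 ≤ j → j ≤ n → ∃ m : ℤ, lam j = (m : ℚ) + 1 / 2))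
    (hdec : ∀ j, 1 ≤ j → j + 1 ≤ n - 1 → lam (j + 1) < lam j)
    (hlast : |lam n| < lam (n - 1)) (hne : lam n ≠ 0)
    (q : ℕ → ℕ → ℚ) (hq : IsGTPattern n lam q)
    (k : ℤ) (hk1 : 1 ≤ |k|) (hk2 : |k| ≤ (n : ℤ)) :
    IsGTPattern n (lamShift k lam) (gtShift (2 * n - 1) k q) ↔
      (k = 1) ∨
      (2 ≤ k ∧ k ≤ (n : ℤ) - 1 ∧ lam k.toNat < q (2 * n - 2) (k.toNat - 1)) ∨
      (k = -(sgnq (lam n)) * (n : ℤ)) ∨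
      (-((n : ℤ) - 1) ≤ k ∧ k ≤ -1 ∧ q (2 * n - 2) (-k).toNat < lam (-k).toNat) ∨
      (k = sgnq (lam n) * (n : ℤ) ∧ |lam n| < q (2 * n - 2) (n - 1)) := by
  rw [Int.abs_eq_natAbs] at hk1 hk2
  have hk0 : k ≠ 0 := by omega
  have htop : ∀ j, 1 ≤ j → j ≤ n → q (2*n-1) j = lam j := hq.2.2
  obtain ⟨hA, ⟨hM1, hM2⟩, hC, hD⟩ := hq.2.1 (n-1) (by omega) le_rfl
  have e1 : 2*(n-1)+1 = 2*n-1 := by omega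
  have e2 : 2*(n-1) = 2*n-2 := by omega
  have e3 : 2*(n-1)-1 = 2*n-3 := by omega
  have e4 : n-1+1 = n := by omega
  rw [e1] at hA hM1 hM2
  rw [e3] at hC hD
  rw [e2] at hA hM1 hM2 hC hD
  rw [e4] at hM2
  have hAq : ∀ j, 1 ≤ j → j + 2 ≤ n → lam j ≥ q (2*n-2) j ∧ q (2*n-2) j ≥ lam (j+1) := by
    intro j a b
    have h := hA j a (by omega)
    rwa [htop j a (by omega), htop (j+1) (by omega) (by omega)] at h
  have hM1q : lam (n-1) ≥ q (2*n-2) (n-1) := by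
    have h := hM1; rwa [htop (n-1) (by omega) (by omega)] at h
  have hM2q : q (2*n-2) (n-1) ≥ |lam n| := by
    have h := hM2; rwa [htop n (by omega) le_rfl] at h
  set q' : ℕ → ℕ → ℚ := gtShift (2*n-1) k q with hq'def
  have hgrow : ∀ a, a ≠ 2*n-1 → ∀ j, q' a j = q a j := by
    intro a ha j
    rw [hq'def]
    simp only [gtShift]
    rw [if_neg]
    rintro ⟨h, -⟩; exact ha h
  have hg2 : ∀ j, q' (2*n-2) j = q (2*n-2) j := hgrow _ (by omega)
  have hg3 : ∀ j, q' (2*n-3) j = q (2*n-3) j := hgrow _ (by omega)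
  have hv : ∀ j, 1 ≤ j → j ≤ n →
      q' (2*n-1) j = (if j = k.natAbs then lam j + (k.sign : ℚ) else lam j) := by
    intro j h1 h2
    rw [hq'def]
    simp only [gtShift]
    by_cases hj : j = k.natAbs
    · rw [if_pos ⟨trivial, hj, hk0⟩, if_pos hj, htop j h1 h2]
    · rw [if_neg (by rintro ⟨-, h, -⟩; exact hj h), if_neg hj, htop j h1 h2]
  have key : IsGTPattern n (lamShift k lam) q' ↔
      ((∀ j, 1 ≤ j → j + 2 ≤ n →
          q' (2*n-1) j ≥ q (2*n-2) j ∧ q (2*n-2) j ≥ q' (2*n-1) (j+1)) ∧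
       q' (2*n-1) (n-1) ≥ q (2*n-2) (n-1) ∧ q (2*n-2) (n-1) ≥ |q' (2*n-1) n|) := by
    constructor
    · intro hL
      obtain ⟨hA2, ⟨hM12, hM22⟩, -, -⟩ := hL.2.1 (n-1) (by omega) le_rfl
      rw [e1] at hA2 hM12 hM22
      rw [e2] at hA2 hM12 hM22
      rw [e4] at hM22
      simp only [hg2] at hA2 hM12 hM22
      exact ⟨fun j a b => hA2 j a (by omega), hM12, hM22⟩
    · rintro ⟨h1, h2, h3⟩
      refine ⟨?_, ?_, ?_⟩
      · rcases hq.1 with hI | hI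
        · left
          intro i j a b c d
          obtain ⟨p, hp⟩ := hI i j a b c d
          by_cases hc : i = 2*n-1 ∧ j = k.natAbs ∧ k ≠ 0
          · refine ⟨p + k.sign, ?_⟩
            rw [hq'def]; simp only [gtShift]
            rw [if_pos hc, hp]; push_cast; ring
          · refine ⟨p, ?_⟩
            rw [hq'def]; simp only [gtShift]
            rw [if_neg hc, hp]
        · right
          intro i j a b c d
          obtain ⟨p, hp⟩ := hI i j a b c d
          by_cases hc : i = 2*n-1 ∧ j = k.natAbs ∧ k ≠ 0
          · refine ⟨p + k.sign, ?_⟩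
            rw [hq'def]; simp only [gtShift]
            rw [if_pos hc, hp]; push_cast; ring
          · refine ⟨p, ?_⟩
            rw [hq'def]; simp only [gtShift]
            rw [if_neg hc, hp]
      · intro i hi1 hi2
        by_cases hi : i = n-1
        · subst hi
          rw [e1, e3, e2, e4]
          simp only [hg2, hg3]
          exact ⟨fun j a b => h1 j a (by omega), ⟨h2, h3⟩, hC, hD⟩
        · have h5 := hq.2.1 i hi1 hi2
          simp only [hgrow (2*i+1) (by omega), hgrow (2*i) (by omega),
            hgrow (2*i-1) (by omega)]
          exact h5
      · intro j hj1 hj2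
        rw [hq'def]
        simp only [gtShift, lamShift]
        by_cases hj : j = k.natAbs
        · rw [if_pos ⟨trivial, hj, hk0⟩, if_pos ⟨hj, hk0⟩, htop j hj1 hj2]
        · rw [if_neg (by rintro ⟨-, h, -⟩; exact hj h), if_neg (by rintro ⟨h, -⟩; exact hj h),
            htop j hj1 hj2]
  rw [key]
  have hclassD : ∀ j j', 1 ≤ j → j ≤ n-1 → 1 ≤ j' → j' ≤ n →
      ∃ p : ℤ, q (2*n-2) j - lam j' = p := by
    intro j j' a b c d
    rw [← htop j' c d]
    rcases hq.1 with hI | hI <;>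
      obtain ⟨p1, hp1⟩ := hI (2*n-2) j (by omega) (by omega) a (by omega) <;>
      obtain ⟨p2, hp2⟩ := hI (2*n-1) j' (by omega) (by omega) c (by omega) <;>
      exact ⟨p1 - p2, by rw [hp1, hp2]; push_cast; ring⟩
  have hclassS : ∃ p : ℤ, q (2*n-2) (n-1) + lam n = p := by
    rw [← htop n (by omega) le_rfl]
    rcases hq.1 with hI | hI
    · obtain ⟨p1, hp1⟩ := hI (2*n-2) (n-1) (by omega) (by omega) (by omega) (by omega)
      obtain ⟨p2, hp2⟩ := hI (2*n-1) n (by omega) (by omega) (by omega) (by omega)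
      exact ⟨p1 + p2, by rw [hp1, hp2]; push_cast; ring⟩
    · obtain ⟨p1, hp1⟩ := hI (2*n-2) (n-1) (by omega) (by omega) (by omega) (by omega)
      obtain ⟨p2, hp2⟩ := hI (2*n-1) n (by omega) (by omega) (by omega) (by omega)
      exact ⟨p1 + p2 + 1, by rw [hp1, hp2]; push_cast; ring⟩
  have h2ln : ∃ p : ℤ, 2 * lam n = p := by
    rcases hint with hI | hI
    · obtain ⟨p, hp⟩ := hI n (by omega) le_rfl
      exact ⟨2*p, by rw [hp]; push_cast; ring⟩
    · obtain ⟨p, hp⟩ := hI n (by omega) le_rfl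
      exact ⟨2*p+1, by rw [hp]; push_cast; ring⟩
  have hsg : sgnq (lam n) = 1 ∨ sgnq (lam n) = -1 := by unfold sgnq; split <;> simp
  have hln : lam n < 0 ∨ 0 < lam n := lt_or_gt_of_ne hne
  obtain ⟨m, hm1, hmn, hk⟩ : ∃ m : ℕ, 1 ≤ m ∧ m ≤ n ∧ (k = ↑m ∨ k = -↑m) :=
    ⟨k.natAbs, by omega, by omega, by omega⟩
  rcases hk with rfl | rfl
  · -- k = ↑m (positive)
    have hsq : (((m:ℤ)).sign : ℚ) = 1 := by
      rw [Int.sign_eq_one_iff_pos.mpr (by exact_mod_cast hm1)]; norm_num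
    have hnab : ((m:ℤ)).natAbs = m := by simp
    simp only [hnab, hsq] at hv
    have hvm : q' (2*n-1) m = lam m + 1 := by simp [hv m hm1 hmn]
    have hvj : ∀ j, 1 ≤ j → j ≤ n → j ≠ m → q' (2*n-1) j = lam j := by
      intro j a b c; simp [hv j a b, c]
    by_cases hmN : m = n
    · -- k = n
      have hvmn : q' (2*n-1) n = lam n + 1 := by have h := hvm; rwa [hmN] at h
      have hcond : ((∀ j, 1 ≤ j → j + 2 ≤ n →
            q' (2*n-1) j ≥ q (2*n-2) j ∧ q (2*n-2) j ≥ q' (2*n-1) (j+1)) ∧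
          q' (2*n-1) (n-1) ≥ q (2*n-2) (n-1) ∧ q (2*n-2) (n-1) ≥ |q' (2*n-1) n|) ↔
          q (2*n-2) (n-1) ≥ |lam n + 1| := by
        constructor
        · intro hc
          have h := hc.2.2; rwa [hvmn] at h
        · intro hb
          refine ⟨?_, ?_, ?_⟩
          · intro j a b
            rw [hvj j a (by omega) (by omega), hvj (j+1) (by omega) (by omega) (by omega)]
            exact hAq j a b
          · rw [hvj (n-1) (by omega) (by omega) (by omega)]
            exact hM1q
          · rw [hvmn]; exact hb
      rw [hcond]
      rcases hln with hneg | hpos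
      · -- lam n < 0 : condition always holds, (c) holds
        have hsgn : sgnq (lam n) = -1 := by unfold sgnq; rw [if_neg (by linarith)]
        have h12 := halfneg h2ln hneg
        have habs1 : |lam n + 1| ≤ -(lam n) := by
          rw [abs_le]; constructor <;> linarith
        have hcondT : q (2*n-2) (n-1) ≥ |lam n + 1| := by
          have h := hM2q; rw [abs_of_neg hneg] at h
          linarith
        constructor
        · intro _
          right; right; left
          rw [hsgn]; omega
        · intro _; exact hcondT
      · -- lam n > 0
        have hsgn : sgnq (lam n) = 1 := by unfold sgnq; rw [if_pos hpos]
        have habs2 : |lam n + 1| = lam n + 1 := abs_of_pos (by linarith)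
        have hgap := gapQ (hclassD (n-1) n (by omega) le_rfl (by omega) le_rfl)
        rw [habs2]
        constructor
        · intro hge
          right; right; right; right
          refine ⟨by rw [hsgn]; omega, ?_⟩
          rw [abs_of_pos hpos]
          exact hgap.mpr hge
        · rintro (h | h | h | h | h)
          · exact absurd h (by omega)
          · exact absurd h.2.1 (by omega)
          · rw [hsgn] at h; exact absurd h (by omega)
          · exact absurd h.2.1 (by omega)
          · obtain ⟨-, h2⟩ := h
            rw [abs_of_pos hpos] at h2
            exact hgap.mp h2
    · -- k = m, 1 ≤ m ≤ n-1
      have hmn' : m ≤ n - 1 := by omega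
      have hcond : ((∀ j, 1 ≤ j → j + 2 ≤ n →
            q' (2*n-1) j ≥ q (2*n-2) j ∧ q (2*n-2) j ≥ q' (2*n-1) (j+1)) ∧
          q' (2*n-1) (n-1) ≥ q (2*n-2) (n-1) ∧ q (2*n-2) (n-1) ≥ |q' (2*n-1) n|) ↔
          (2 ≤ m → q (2*n-2) (m-1) ≥ lam m + 1) := by
        constructor
        · intro hc h2
          have h := (hc.1 (m-1) (by omega) (by omega)).2
          rwa [show m - 1 + 1 = m by omega, hvm] at h
        · intro hb
          refine ⟨?_, ?_, ?_⟩
          · intro j a b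
            constructor
            · rcases eq_or_ne j m with rfl | hj
              · rw [hvm]
                have h := (hAq j a b).1; linarith
              · rw [hvj j a (by omega) hj]
                exact (hAq j a b).1
            · rcases eq_or_ne (j+1) m with hj | hj
              · rw [hj, hvm]
                have h' := hb (by omega)
                rwa [show m - 1 = j by omega] at h'
              · rw [hvj (j+1) (by omega) (by omega) hj]
                exact (hAq j a b).2
          · by_cases hj : n - 1 = m
            · rw [hj, hvm]
              have h := hM1q; rw [hj] at h; linarith
            · rw [hvj (n-1) (by omega) (by omega) hj]
              exact hM1q
          · rw [hvj n (by omega) le_rfl (by omega)]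
            exact hM2q
      rw [hcond]
      by_cases hm1' : m = 1
      · constructor
        · intro _; left; omega
        · intro _ h2; exact absurd h2 (by omega)
      · have hgap := gapQ (hclassD (m-1) m (by omega) (by omega) (by omega) (by omega))
        constructor
        · intro hb
          right; left
          refine ⟨by omega, by omega, ?_⟩
          show lam m < q (2*n-2) (m-1)
          exact hgap.mpr (hb (by omega))
        · rintro (h | h | h | h | h) h2
          · exact absurd h (by omega)
          · have h3 : lam m < q (2*n-2) (m-1) := h.2.2
            exact hgap.mp h3
          · exfalso; rcases hsg with h' | h' <;> rw [h'] at h <;> omega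
          · exact absurd h.2.1 (by omega)
          · exfalso; rcases hsg with h' | h' <;> rw [h'] at h <;> exact absurd h.1 (by omega)
  · -- k = -↑m (negative)
    have hsq : (((-(m:ℤ))).sign : ℚ) = -1 := by
      rw [Int.sign_eq_neg_one_iff_neg.mpr (by omega)]; norm_num
    have hnab : ((-(m:ℤ))).natAbs = m := by simp
    simp only [hnab, hsq] at hv
    have hvm : q' (2*n-1) m = lam m + (-1) := by simp [hv m hm1 hmn]
    have hvj : ∀ j, 1 ≤ j → j ≤ n → j ≠ m → q' (2*n-1) j = lam j := by
      intro j a b c; simp [hv j a b, c]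
    by_cases hmN : m = n
    · -- k = -n
      have hvmn : q' (2*n-1) n = lam n + (-1) := by have h := hvm; rwa [hmN] at h
      have hcond : ((∀ j, 1 ≤ j → j + 2 ≤ n →
            q' (2*n-1) j ≥ q (2*n-2) j ∧ q (2*n-2) j ≥ q' (2*n-1) (j+1)) ∧
          q' (2*n-1) (n-1) ≥ q (2*n-2) (n-1) ∧ q (2*n-2) (n-1) ≥ |q' (2*n-1) n|) ↔
          q (2*n-2) (n-1) ≥ |lam n + (-1)| := by
        constructor
        · intro hc
          have h := hc.2.2; rwa [hvmn] at h
        · intro hb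
          refine ⟨?_, ?_, ?_⟩
          · intro j a b
            rw [hvj j a (by omega) (by omega), hvj (j+1) (by omega) (by omega) (by omega)]
            exact hAq j a b
          · rw [hvj (n-1) (by omega) (by omega) (by omega)]
            exact hM1q
          · rw [hvmn]; exact hb
      rw [hcond]
      rcases hln with hneg | hpos
      · -- lam n < 0 : case (e) with sgn = -1
        have hsgn : sgnq (lam n) = -1 := by unfold sgnq; rw [if_neg (by linarith)]
        have habs : |lam n + (-1)| = -(lam n) + 1 := by
          rw [abs_of_neg (by linarith)]; ring
        have hgap : -(lam n) < q (2*n-2) (n-1) ↔ -(lam n) + 1 ≤ q (2*n-2) (n-1) := by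
          refine gapQ ?_
          obtain ⟨p, hp⟩ := hclassS
          exact ⟨p, by linarith⟩
        rw [habs]
        constructor
        · intro hb
          right; right; right; right
          refine ⟨by rw [hsgn]; omega, ?_⟩
          rw [abs_of_neg hneg]
          exact hgap.mpr (by linarith)
        · rintro (h | h | h | h | h)
          · exact absurd h (by omega)
          · exact absurd h.2.1 (by omega)
          · rw [hsgn] at h; exact absurd h (by omega)
          · exact absurd h.1 (by omega)
          · obtain ⟨-, h2⟩ := h
            rw [abs_of_neg hneg] at h2
            linarith [hgap.mp h2]
      · -- lam n > 0 : always holds, (c) holds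
        have hsgn : sgnq (lam n) = 1 := by unfold sgnq; rw [if_pos hpos]
        have h12 := halfpos h2ln hpos
        have habs : |lam n + (-1)| ≤ lam n := by
          rw [abs_le]; constructor <;> linarith
        have hT : q (2*n-2) (n-1) ≥ |lam n + (-1)| := by
          have h := hM2q; rw [abs_of_pos hpos] at h; linarith
        constructor
        · intro _
          right; right; left
          rw [hsgn]; omega
        · intro _; exact hT
    · -- k = -m, 1 ≤ m ≤ n-1
      have hmn' : m ≤ n - 1 := by omega
      have hcond : ((∀ j, 1 ≤ j → j + 2 ≤ n →
            q' (2*n-1) j ≥ q (2*n-2) j ∧ q (2*n-2) j ≥ q' (2*n-1) (j+1)) ∧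
          q' (2*n-1) (n-1) ≥ q (2*n-2) (n-1) ∧ q (2*n-2) (n-1) ≥ |q' (2*n-1) n|) ↔
          lam m + (-1) ≥ q (2*n-2) m := by
        constructor
        · intro hc
          by_cases hj : m = n - 1
          · have h := hc.2.1
            rw [← hj] at h
            rwa [hvm] at h
          · have h := (hc.1 m (by omega) (by omega)).1
            rwa [hvm] at h
        · intro hb
          refine ⟨?_, ?_, ?_⟩
          · intro j a b
            constructor
            · rcases eq_or_ne j m with rfl | hj
              · rw [hvm]; exact hb
              · rw [hvj j a (by omega) hj]
                exact (hAq j a b).1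
            · rcases eq_or_ne (j+1) m with hj | hj
              · rw [hj, hvm]
                have h := (hAq j a b).2
                rw [hj] at h; linarith
              · rw [hvj (j+1) (by omega) (by omega) hj]
                exact (hAq j a b).2
          · by_cases hj : n - 1 = m
            · rw [hj, hvm]
              exact hb
            · rw [hvj (n-1) (by omega) (by omega) hj]
              exact hM1q
          · rw [hvj n (by omega) le_rfl (by omega)]
            exact hM2q
      rw [hcond]
      have hgap : q (2*n-2) m < lam m ↔ q (2*n-2) m + 1 ≤ lam m := by
        refine gapQ ?_
        obtain ⟨p, hp⟩ := hclassD m m (by omega) (by omega) (by omega) (by omega)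
        exact ⟨-p, by push_cast; linarith⟩
      have htn : ((-(-(m:ℤ))).toNat) = m := by omega
      constructor
      · intro hb
        right; right; right; left
        refine ⟨by omega, by omega, ?_⟩
        rw [htn]
        exact hgap.mpr (by linarith)
      · rintro (h | h | h | h | h)
        · exact absurd h (by omega)
        · exact absurd h.1 (by omega)
        · exfalso; rcases hsg with h' | h' <;> rw [h'] at h <;> omega
        · obtain ⟨-, -, h3⟩ := h
          rw [htn] at h3
          linarith [hgap.mp h3]
        · exfalso; rcases hsg with h' | h' <;> rw [h'] at h <;> exact absurd h.1 (by omega)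
end

section
/- For every Q ∈ GT(λ), every integer k with 1 ≤ |k| ≤ n, and every integer j with 0 ≤ |j| ≤ n−1, the two conditions 'τ_{0,j}σ_{2n−1,k}Q ∈ GT(λ + e_k)' and 'τ_{0,j}Q ∉ GT(λ)' hold simultaneously if and only if one of the following holds: (a) 1 ≤ k ≤ n−1, j = k, q_{2n−2,k} = λ_k, and, in case k ≥ 2, q_{2n−3,k−1} > λ_k; (b) −(n−1) ≤ k ≤ −2, j = k+1, q_{2n−2,−k−1} = λ_{−k}, and q_{2n−3,−k−1} < λ_{−k}; (c) k = −sgn(λ_n)·n, j = −(n−1), q_{2n−2,n−1} = |λ_n|, and |q_{2n−3,n−1}| < |λ_n|. -/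
def gtTau (n : ℕ) (i j : ℤ) (q : ℕ → ℕ → ℚ) : ℕ → ℕ → ℚ :=
  gtShift (2 * n - 3) i (gtShift (2 * n - 2) j q)

/- ### helper lemmas -/

lemma gtShift_zero (a : ℕ) (q : ℕ → ℕ → ℚ) : gtShift a 0 q = q := by
  funext i j; simp [gtShift]

lemma lamShift_zero (lam : ℕ → ℚ) : lamShift 0 lam = lam := by
  funext j; simp [lamShift]

lemma gtShift_ne (a : ℕ) (b : ℤ) (q : ℕ → ℕ → ℚ) {i : ℕ} (h : i ≠ a) (t : ℕ) :
    gtShift a b q i t = q i t := by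
  simp [gtShift, h]

lemma gtShift_row (a : ℕ) (b : ℤ) (q : ℕ → ℕ → ℚ) (t : ℕ) :
    gtShift a b q a t = lamShift b (q a) t := by
  simp [gtShift, lamShift]

lemma lamShift_ne (b : ℤ) (lam : ℕ → ℚ) {t : ℕ} (h : t ≠ b.natAbs) :
    lamShift b lam t = lam t := by
  simp [lamShift, h]

lemma int_pres (n a : ℕ) (b : ℤ) (q : ℕ → ℕ → ℚ)
    (h : (∀ i j, 1 ≤ i → i ≤ 2 * n - 1 → 1 ≤ j → j ≤ (i + 1) / 2 → ∃ m : ℤ, q i j = (m : ℚ)) ∨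
         (∀ i j, 1 ≤ i → i ≤ 2 * n - 1 → 1 ≤ j → j ≤ (i + 1) / 2 →
            ∃ m : ℤ, q i j = (m : ℚ) + 1 / 2)) :
    (∀ i j, 1 ≤ i → i ≤ 2 * n - 1 → 1 ≤ j → j ≤ (i + 1) / 2 →
        ∃ m : ℤ, gtShift a b q i j = (m : ℚ)) ∨
    (∀ i j, 1 ≤ i → i ≤ 2 * n - 1 → 1 ≤ j → j ≤ (i + 1) / 2 →
        ∃ m : ℤ, gtShift a b q i j = (m : ℚ) + 1 / 2) := by
  rcases h with h | h
  · left
    intro i j h1 h2 h3 h4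
    obtain ⟨c, hc⟩ := h i j h1 h2 h3 h4
    unfold gtShift
    split
    · exact ⟨c + b.sign, by rw [hc]; push_cast; ring⟩
    · exact ⟨c, hc⟩
  · right
    intro i j h1 h2 h3 h4
    obtain ⟨c, hc⟩ := h i j h1 h2 h3 h4
    unfold gtShift
    split
    · exact ⟨c + b.sign, by rw [hc]; push_cast; ring⟩
    · exact ⟨c, hc⟩

lemma key (m : ℕ) (lam : ℕ → ℚ) (q : ℕ → ℕ → ℚ) (hq : IsGTPattern (m+2) lam q)
    (k j : ℤ) (hk : k.natAbs ≤ m + 2) (hj : j.natAbs ≤ m + 1) :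
    IsGTPattern (m+2) (lamShift k lam) (gtShift (2*(m+2)-2) j (gtShift (2*(m+2)-1) k q)) ↔
      ((∀ t, 1 ≤ t → t ≤ m → lamShift k lam t ≥ lamShift j (q (2*m+2)) t ∧
          lamShift j (q (2*m+2)) t ≥ lamShift k lam (t+1)) ∧
       (lamShift k lam (m+1) ≥ lamShift j (q (2*m+2)) (m+1) ∧
          lamShift j (q (2*m+2)) (m+1) ≥ |lamShift k lam (m+2)|) ∧
       (∀ t, 1 ≤ t → t ≤ m → lamShift j (q (2*m+2)) t ≥ q (2*m+1) t ∧
          q (2*m+1) t ≥ lamShift j (q (2*m+2)) (t+1)) ∧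
       (lamShift j (q (2*m+2)) (m+1) ≥ q (2*m+1) (m+1) ∧
          q (2*m+1) (m+1) ≥ -(lamShift j (q (2*m+2)) (m+1)))) := by
  have e1 : 2*(m+2)-1 = 2*m+3 := by omega
  have e2 : 2*(m+2)-2 = 2*m+2 := by omega
  rw [e1, e2]
  set q' := gtShift (2*m+2) j (gtShift (2*m+3) k q) with hq'def
  have hrow : ∀ i t, i ≠ 2*m+2 → i ≠ 2*m+3 → q' i t = q i t := by
    intro i t h1 h2
    rw [hq'def, gtShift_ne _ _ _ h1, gtShift_ne _ _ _ h2]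
  have hrowR : ∀ t, q' (2*m+2) t = lamShift j (q (2*m+2)) t := by
    intro t
    rw [hq'def, gtShift_row]
    unfold lamShift
    rw [gtShift_ne _ _ _ (by omega : (2*m+2 : ℕ) ≠ 2*m+3)]
  have htop0 : ∀ t, 1 ≤ t → t ≤ m+2 → q (2*m+3) t = lam t := by
    intro t h1 h2
    have := hq.2.2 t h1 h2
    rwa [e1] at this
  have hrowT : ∀ t, 1 ≤ t → t ≤ m+2 → q' (2*m+3) t = lamShift k lam t := by
    intro t h1 h2
    rw [hq'def, gtShift_ne _ _ _ (by omega : (2*m+3 : ℕ) ≠ 2*m+2), gtShift_row]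
    unfold lamShift
    rw [htop0 t h1 h2]
  have f2 : 2*(m+1) = 2*m+2 := by omega
  have f1 : 2*m+2+1 = 2*m+3 := by omega
  have f3 : 2*m+2-1 = 2*m+1 := by omega
  have f4 : (m+1)-1 = m := by omega
  have f5 : m+1+1 = m+2 := by omega
  constructor
  · intro h
    have hb := h.2.1 (m+1) (by omega) (by omega)
    simp only [f2, f1, f3, f4, f5] at hb
    refine ⟨?_, ?_, ?_, ?_⟩
    · intro t h1 h2
      have := hb.1 t h1 h2
      rwa [hrowT t h1 (by omega), hrowT (t+1) (by omega) (by omega), hrowR t] at this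
    · have := hb.2.1
      rwa [hrowT (m+1) (by omega) (by omega), hrowT (m+2) (by omega) (by omega),
        hrowR (m+1)] at this
    · intro t h1 h2
      have := hb.2.2.1 t h1 h2
      rwa [hrowR t, hrowR (t+1), hrow (2*m+1) t (by omega) (by omega)] at this
    · have := hb.2.2.2
      rwa [hrowR (m+1), hrow (2*m+1) (m+1) (by omega) (by omega)] at this
  · intro h
    unfold IsGTPattern
    simp only [e1]
    refine ⟨?_, ?_, ?_⟩
    · rcases int_pres (m+2) (2*m+2) j _ (int_pres (m+2) (2*m+3) k q hq.1) with hI | hI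
      · left; intro i t h1 h2 h3 h4; exact hI i t h1 (by omega) h3 h4
      · right; intro i t h1 h2 h3 h4; exact hI i t h1 (by omega) h3 h4
    · intro i hi1 hi2
      by_cases hi : i = m+1
      · subst hi
        simp only [f2, f1, f3, f4, f5]
        refine ⟨?_, ?_, ?_, ?_⟩
        · intro t h1 h2
          rw [hrowT t h1 (by omega), hrowT (t+1) (by omega) (by omega), hrowR t]
          exact h.1 t h1 h2
        · rw [hrowT (m+1) (by omega) (by omega), hrowT (m+2) (by omega) (by omega),
            hrowR (m+1)]
          exact h.2.1
        · intro t h1 h2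
          rw [hrowR t, hrowR (t+1), hrow (2*m+1) t (by omega) (by omega)]
          exact h.2.2.1 t h1 h2
        · rw [hrowR (m+1), hrow (2*m+1) (m+1) (by omega) (by omega)]
          exact h.2.2.2
      · have him : i ≤ m := by omega
        have hcopy := hq.2.1 i hi1 (by omega)
        refine ⟨?_, ?_, ?_, ?_⟩
        · intro t h1 h2
          rw [hrow (2*i+1) t (by omega) (by omega), hrow (2*i) t (by omega) (by omega),
            hrow (2*i+1) (t+1) (by omega) (by omega)]
          exact hcopy.1 t h1 h2
        · rw [hrow (2*i+1) i (by omega) (by omega), hrow (2*i) i (by omega) (by omega),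
            hrow (2*i+1) (i+1) (by omega) (by omega)]
          exact hcopy.2.1
        · intro t h1 h2
          rw [hrow (2*i) t (by omega) (by omega), hrow (2*i-1) t (by omega) (by omega),
            hrow (2*i) (t+1) (by omega) (by omega)]
          exact hcopy.2.2.1 t h1 h2
        · rw [hrow (2*i) i (by omega) (by omega), hrow (2*i-1) i (by omega) (by omega)]
          exact hcopy.2.2.2
    · intro t h1 h2
      exact hrowT t h1 h2

lemma lamShift_pos {b : ℤ} (hb : 0 < b) (f : ℕ → ℚ) :
    lamShift b f b.natAbs = f b.natAbs + 1 := by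
  have h1 : b.sign = 1 := Int.sign_eq_one_iff_pos.mpr hb
  simp [lamShift, hb.ne', h1]

lemma lamShift_neg {b : ℤ} (hb : b < 0) (f : ℕ → ℚ) :
    lamShift b f b.natAbs = f b.natAbs - 1 := by
  have h1 : b.sign = -1 := Int.sign_eq_neg_one_iff_neg.mpr hb
  have h2 : b ≠ 0 := hb.ne
  unfold lamShift
  rw [if_pos ⟨rfl, h2⟩, h1]
  push_cast
  ring

lemma hstep {x y : ℚ} (h : ∃ d : ℤ, x - y = d) (hxy : x < y) : x + 1 ≤ y := by
  obtain ⟨d, hd⟩ := h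
  have h1 : (d : ℚ) < 0 := by linarith
  have h2 : d < 0 := by exact_mod_cast h1
  have h3 : (d : ℚ) ≤ -1 := by exact_mod_cast (by omega : d ≤ -1)
  linarith

/-- **Lemma 5.5 (2) of the paper.**  For `Q ∈ GT(λ)`, `1 ≤ |k| ≤ n` and `0 ≤ |j| ≤ n−1`:
`τ_{0,j} σ_{2n−1,k} Q ∈ GT(λ + e_k)` and `τ_{0,j} Q ∉ GT(λ)` hold simultaneously iff
one of the conditions (a)–(c) holds. -/
theorem stmt3 (n : ℕ) (hn : 2 ≤ n) (lam : ℕ → ℚ)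
    (hint : (∀ j, 1 ≤ j → j ≤ n → ∃ m : ℤ, lam j = (m : ℚ)) ∨
            (∀ j, 1 ≤ j → j ≤ n → ∃ m : ℤ, lam j = (m : ℚ) + 1 / 2))
    (hdec : ∀ j, 1 ≤ j → j + 1 ≤ n - 1 → lam (j + 1) < lam j)
    (hlast : |lam n| < lam (n - 1)) (hne : lam n ≠ 0)
    (q : ℕ → ℕ → ℚ) (hq : IsGTPattern n lam q)
    (k : ℤ) (hk1 : 1 ≤ |k|) (hk2 : |k| ≤ (n : ℤ))
    (j : ℤ) (hj : |j| ≤ (n : ℤ) - 1) :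
    (IsGTPattern n (lamShift k lam) (gtTau n 0 j (gtShift (2 * n - 1) k q)) ∧
      ¬ IsGTPattern n lam (gtTau n 0 j q)) ↔
      (1 ≤ k ∧ k ≤ (n : ℤ) - 1 ∧ j = k ∧
        q (2 * n - 2) k.toNat = lam k.toNat ∧
        (2 ≤ k → lam k.toNat < q (2 * n - 3) (k.toNat - 1))) ∨
      (-((n : ℤ) - 1) ≤ k ∧ k ≤ -2 ∧ j = k + 1 ∧
        q (2 * n - 2) ((-k).toNat - 1) = lam (-k).toNat ∧
        q (2 * n - 3) ((-k).toNat - 1) < lam (-k).toNat) ∨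
      (k = -(sgnq (lam n)) * (n : ℤ) ∧ j = -((n : ℤ) - 1) ∧
        q (2 * n - 2) (n - 1) = |lam n| ∧ |q (2 * n - 3) (n - 1)| < |lam n|) := by
  obtain ⟨m, rfl⟩ : ∃ m, n = m + 2 := ⟨n - 2, by omega⟩
  rw [Int.abs_eq_natAbs] at hk1 hk2 hj
  have hk' : k.natAbs ≤ m + 2 := by exact_mod_cast hk2
  have hk1' : 1 ≤ k.natAbs := by exact_mod_cast hk1
  have hj' : j.natAbs ≤ m + 1 := by
    have : ((j.natAbs : ℤ)) ≤ ((m+2 : ℕ) : ℤ) - 1 := hj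
    omega
  have htau : ∀ X, gtTau (m+2) 0 j X = gtShift (2*(m+2)-2) j X := by
    intro X; unfold gtTau; rw [gtShift_zero]
  rw [htau, htau]
  rw [key m lam q hq k j hk' hj']
  have E0 : IsGTPattern (m+2) lam (gtShift (2*(m+2)-2) j q) ↔
      ((∀ t, 1 ≤ t → t ≤ m → lam t ≥ lamShift j (q (2*m+2)) t ∧
          lamShift j (q (2*m+2)) t ≥ lam (t+1)) ∧
       (lam (m+1) ≥ lamShift j (q (2*m+2)) (m+1) ∧
          lamShift j (q (2*m+2)) (m+1) ≥ |lam (m+2)|) ∧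
       (∀ t, 1 ≤ t → t ≤ m → lamShift j (q (2*m+2)) t ≥ q (2*m+1) t ∧
          q (2*m+1) t ≥ lamShift j (q (2*m+2)) (t+1)) ∧
       (lamShift j (q (2*m+2)) (m+1) ≥ q (2*m+1) (m+1) ∧
          q (2*m+1) (m+1) ≥ -(lamShift j (q (2*m+2)) (m+1)))) := by
    have h0 := key m lam q hq 0 j (by simp) hj'
    rwa [lamShift_zero, gtShift_zero] at h0
  rw [E0]
  simp only [show 2*(m+2)-2 = 2*m+2 from by omega, show 2*(m+2)-3 = 2*m+1 from by omega,
    show (m+2)-1 = m+1 from by omega]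
  -- ### setup: integrality and base interlacing facts
  have hlamq : ∀ a, 1 ≤ a → a ≤ m+2 → lam a = q (2*m+3) a := by
    intro a h1 h2
    have := hq.2.2 a h1 h2
    rw [show 2*(m+2)-1 = 2*m+3 from by omega] at this
    exact this.symm
  have hdiffq : ∀ i t i' t', 1 ≤ i → i ≤ 2*m+3 → 1 ≤ t → t ≤ (i+1)/2 →
      1 ≤ i' → i' ≤ 2*m+3 → 1 ≤ t' → t' ≤ (i'+1)/2 →
      ∃ d : ℤ, q i t - q i' t' = d := by
    intro i t i' t' h1 h2 h3 h4 h5 h6 h7 h8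
    rcases hq.1 with hI | hI
    · obtain ⟨a, ha⟩ := hI i t h1 (by omega) h3 h4
      obtain ⟨b, hb⟩ := hI i' t' h5 (by omega) h7 h8
      exact ⟨a - b, by rw [ha, hb]; push_cast; ring⟩
    · obtain ⟨a, ha⟩ := hI i t h1 (by omega) h3 h4
      obtain ⟨b, hb⟩ := hI i' t' h5 (by omega) h7 h8
      exact ⟨a - b, by rw [ha, hb]; push_cast; ring⟩
  have hsumq : ∀ i t i' t', 1 ≤ i → i ≤ 2*m+3 → 1 ≤ t → t ≤ (i+1)/2 →
      1 ≤ i' → i' ≤ 2*m+3 → 1 ≤ t' → t' ≤ (i'+1)/2 →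
      ∃ d : ℤ, q i t + q i' t' = d := by
    intro i t i' t' h1 h2 h3 h4 h5 h6 h7 h8
    rcases hq.1 with hI | hI
    · obtain ⟨a, ha⟩ := hI i t h1 (by omega) h3 h4
      obtain ⟨b, hb⟩ := hI i' t' h5 (by omega) h7 h8
      exact ⟨a + b, by rw [ha, hb]; push_cast; ring⟩
    · obtain ⟨a, ha⟩ := hI i t h1 (by omega) h3 h4
      obtain ⟨b, hb⟩ := hI i' t' h5 (by omega) h7 h8
      exact ⟨a + b + 1, by rw [ha, hb]; push_cast; ring⟩
  have dgen : ∀ (i : ℕ), (i = 2*m+1 ∨ i = 2*m+2) → ∀ t, 1 ≤ t → t ≤ m+1 →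
      ∀ a, 1 ≤ a → a ≤ m+2 →
      (∃ d : ℤ, q i t - lam a = d) ∧ (∃ d : ℤ, q i t + lam a = d) := by
    intro i hi t h1 h2 a h3 h4
    rw [hlamq a h3 h4]
    rcases hi with rfl | rfl
    · exact ⟨hdiffq _ t _ a (by omega) (by omega) h1 (by omega) (by omega) (by omega) h3
        (by omega),
        hsumq _ t _ a (by omega) (by omega) h1 (by omega) (by omega) (by omega) h3 (by omega)⟩
    · exact ⟨hdiffq _ t _ a (by omega) (by omega) h1 (by omega) (by omega) (by omega) h3
        (by omega),
        hsumq _ t _ a (by omega) (by omega) h1 (by omega) (by omega) (by omega) h3 (by omega)⟩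
  have dneg : ∀ {x y : ℚ}, (∃ d : ℤ, x - y = d) → (∃ d : ℤ, y - x = d) := by
    rintro x y ⟨d, hd⟩
    exact ⟨-d, by push_cast; linarith⟩
  have dabsLr : ∃ d : ℤ, |lam (m+2)| - q (2*m+2) (m+1) = d := by
    obtain ⟨⟨d1, h1⟩, ⟨d2, h2⟩⟩ := dgen (2*m+2) (Or.inr rfl) (m+1) (by omega) (by omega)
      (m+2) (by omega) (by omega)
    rcases le_or_gt 0 (lam (m+2)) with hL0 | hL0
    · rw [abs_of_nonneg hL0]; exact ⟨-d1, by push_cast; linarith⟩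
    · rw [abs_of_neg hL0]; exact ⟨-d2, by push_cast; linarith⟩
  have dabssl : ∃ d : ℤ, |q (2*m+1) (m+1)| - |lam (m+2)| = d := by
    obtain ⟨⟨d1, h1⟩, ⟨d2, h2⟩⟩ := dgen (2*m+1) (Or.inl rfl) (m+1) (by omega) (by omega)
      (m+2) (by omega) (by omega)
    rcases le_or_gt 0 (q (2*m+1) (m+1)) with hs0 | hs0 <;>
      rcases le_or_gt 0 (lam (m+2)) with hL0 | hL0
    · rw [abs_of_nonneg hs0, abs_of_nonneg hL0]; exact ⟨d1, h1⟩
    · rw [abs_of_nonneg hs0, abs_of_neg hL0]; exact ⟨d2, by push_cast; linarith⟩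
    · rw [abs_of_neg hs0, abs_of_nonneg hL0]; exact ⟨-d2, by push_cast; linarith⟩
    · rw [abs_of_neg hs0, abs_of_neg hL0]; exact ⟨-d1, by push_cast; linarith⟩
  have hlast' : |lam (m+2)| < lam (m+1) := by
    have h := hlast
    rwa [show m+2-1 = m+1 from by omega] at h
  have base := (key m lam q hq 0 0 (by simp) (by simp)).mp
    (by rw [lamShift_zero, gtShift_zero, gtShift_zero]; exact hq)
  simp only [lamShift_zero] at base
  obtain ⟨bA, bB, bC, bD⟩ := base
  constructor
  · -- ### forward direction
    rintro ⟨⟨pA, pB, pC, pD⟩, hneg⟩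
    have hneg2 : ¬((∀ t, 1 ≤ t → t ≤ m → lam t ≥ lamShift j (q (2*m+2)) t ∧
        lamShift j (q (2*m+2)) t ≥ lam (t+1)) ∧
        (lam (m+1) ≥ lamShift j (q (2*m+2)) (m+1) ∧
          lamShift j (q (2*m+2)) (m+1) ≥ |lam (m+2)|)) := by
      intro hAB
      exact hneg ⟨hAB.1, hAB.2, pC, pD⟩
    have hj0 : j ≠ 0 := by
      rintro rfl
      exact hneg2 (by rw [lamShift_zero]; exact ⟨bA, bB⟩)
    have hk0 : k ≠ 0 := by omega
    rcases hj0.lt_or_gt with hjneg | hjpos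
    · -- j < 0
      have hJ1 : 1 ≤ j.natAbs := by omega
      have hRJ := lamShift_neg hjneg (q (2*m+2))
      have hRt : ∀ t, t ≠ j.natAbs → lamShift j (q (2*m+2)) t = q (2*m+2) t :=
        fun t ht => lamShift_ne _ _ ht
      by_cases hJm : j.natAbs ≤ m
      · -- case (b)
        have hlow : q (2*m+2) j.natAbs ≥ lam (j.natAbs + 1) := (bA j.natAbs hJ1 hJm).2
        have hrJ : q (2*m+2) j.natAbs = lam (j.natAbs + 1) := by
          by_contra hcon
          have hlt : lam (j.natAbs + 1) < q (2*m+2) j.natAbs :=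
            lt_of_le_of_ne hlow (fun h => hcon h.symm)
          have hplus : lam (j.natAbs + 1) + 1 ≤ q (2*m+2) j.natAbs :=
            hstep (dneg (dgen (2*m+2) (Or.inr rfl) j.natAbs hJ1 (by omega)
              (j.natAbs + 1) (by omega) (by omega)).1) hlt
          apply hneg2
          constructor
          · intro t h1 h2
            by_cases hteq : t = j.natAbs
            · subst hteq
              rw [hRJ]
              exact ⟨by linarith [(bA j.natAbs h1 h2).1], by linarith⟩
            · rw [hRt t hteq]; exact bA t h1 h2
          · rw [hRt (m+1) (by omega)]; exact bB
        have hlow2 := (pA j.natAbs hJ1 hJm).2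
        rw [hRJ, hrJ] at hlow2
        have hkval : k = -(j.natAbs : ℤ) - 1 := by
          by_cases hkJ : j.natAbs + 1 = k.natAbs
          · rcases hk0.lt_or_gt with hkneg | hkpos
            · omega
            · exfalso
              rw [hkJ] at hlow2
              rw [lamShift_pos hkpos lam] at hlow2
              linarith
          · exfalso
            rw [lamShift_ne _ _ hkJ] at hlow2
            linarith
        refine Or.inr (Or.inl ⟨by omega, by omega, by omega, ?_, ?_⟩)
        · rw [show (-k).toNat - 1 = j.natAbs from by omega,
            show (-k).toNat = j.natAbs + 1 from by omega]
          exact hrJ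
        · rw [show (-k).toNat - 1 = j.natAbs from by omega,
            show (-k).toNat = j.natAbs + 1 from by omega]
          have hpc := (pC j.natAbs hJ1 hJm).1
          rw [hRJ, hrJ] at hpc
          linarith
      · -- case (c) : j.natAbs = m+1
        have hJe : j.natAbs = m+1 := by omega
        rw [hJe] at hRJ
        have hrJ : q (2*m+2) (m+1) = |lam (m+2)| := by
          by_contra hcon
          have hlt : |lam (m+2)| < q (2*m+2) (m+1) :=
            lt_of_le_of_ne bB.2 (fun h => hcon h.symm)
          have hplus : |lam (m+2)| + 1 ≤ q (2*m+2) (m+1) := hstep dabsLr hlt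
          apply hneg2
          constructor
          · intro t h1 h2
            rw [hRt t (by omega)]; exact bA t h1 h2
          · rw [hRJ]
            exact ⟨by linarith [bB.1], by linarith⟩
        have hlow2 := pB.2
        rw [hRJ, hrJ] at hlow2
        have hkn : k.natAbs = m+2 := by
          by_contra hc
          rw [lamShift_ne _ _ (fun h => hc h.symm)] at hlow2
          linarith
        have hsfin : |q (2*m+1) (m+1)| < |lam (m+2)| := by
          have h1 := pD.1
          have h2 := pD.2
          rw [hRJ, hrJ] at h1 h2
          rw [abs_lt]
          exact ⟨by linarith, by linarith⟩
        refine Or.inr (Or.inr ⟨?_, by omega, hrJ, hsfin⟩)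
        rcases hne.lt_or_gt with hLneg | hLpos
        · -- lam (m+2) < 0, k must be positive
          have hkpos : 0 < k := by
            rcases hk0.lt_or_gt with h' | h'
            · exfalso
              have hL2 := lamShift_neg h' lam
              rw [hkn] at hL2
              rw [hL2, abs_of_neg hLneg, abs_of_neg (by linarith : lam (m+2) - 1 < 0)]
                at hlow2
              linarith
            · exact h'
          have hsq : sgnq (lam (m+2)) = -1 := by
            unfold sgnq; rw [if_neg (not_lt.mpr hLneg.le)]
          rw [hsq]
          have hke : k = ((m+2 : ℕ) : ℤ) := by omega
          rw [hke]; ring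
        · -- lam (m+2) > 0, k must be negative
          have hkneg : k < 0 := by
            rcases hk0.lt_or_gt with h' | h'
            · exact h'
            · exfalso
              have hL2 := lamShift_pos h' lam
              rw [hkn] at hL2
              rw [hL2, abs_of_pos hLpos, abs_of_pos (by linarith : (0:ℚ) < lam (m+2) + 1)]
                at hlow2
              linarith
          have hsq : sgnq (lam (m+2)) = 1 := by
            unfold sgnq; rw [if_pos hLpos]
          rw [hsq]
          have hke : k = -((m+2 : ℕ) : ℤ) := by omega
          rw [hke]; ring
    · -- j > 0
      have hJ1 : 1 ≤ j.natAbs := by omega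
      have hRJ := lamShift_pos hjpos (q (2*m+2))
      have hRt : ∀ t, t ≠ j.natAbs → lamShift j (q (2*m+2)) t = q (2*m+2) t :=
        fun t ht => lamShift_ne _ _ ht
      have hup : lam j.natAbs ≥ q (2*m+2) j.natAbs := by
        by_cases hc : j.natAbs ≤ m
        · exact (bA j.natAbs hJ1 hc).1
        · rw [show j.natAbs = m+1 from by omega]; exact bB.1
      have hrJ : q (2*m+2) j.natAbs = lam j.natAbs := by
        by_contra hcon
        have hlt : q (2*m+2) j.natAbs < lam j.natAbs := lt_of_le_of_ne hup hcon
        have hplus : q (2*m+2) j.natAbs + 1 ≤ lam j.natAbs :=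
          hstep (dgen (2*m+2) (Or.inr rfl) j.natAbs hJ1 (by omega) j.natAbs hJ1
            (by omega)).1 hlt
        apply hneg2
        constructor
        · intro t h1 h2
          by_cases hteq : t = j.natAbs
          · subst hteq
            rw [hRJ]
            exact ⟨hplus, by linarith [(bA j.natAbs h1 h2).2]⟩
          · rw [hRt t hteq]; exact bA t h1 h2
        · by_cases hteq : m+1 = j.natAbs
          · rw [← hteq] at hRJ hplus
            rw [hRJ]
            exact ⟨hplus, by linarith [bB.2]⟩
          · rw [hRt (m+1) hteq]; exact bB
      have hup2 : lamShift k lam j.natAbs ≥ lamShift j (q (2*m+2)) j.natAbs := by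
        by_cases hc : j.natAbs ≤ m
        · exact (pA j.natAbs hJ1 hc).1
        · rw [show j.natAbs = m+1 from by omega]; exact pB.1
      rw [hRJ, hrJ] at hup2
      have hkj : k = j := by
        by_cases hkJ : j.natAbs = k.natAbs
        · rcases hk0.lt_or_gt with hkneg | hkpos
          · exfalso
            rw [hkJ, lamShift_neg hkneg lam, ← hkJ] at hup2
            linarith
          · omega
        · exfalso
          rw [lamShift_ne _ _ hkJ] at hup2
          linarith
      have hKt : k.toNat = j.natAbs := by omega
      refine Or.inl ⟨by omega, by omega, hkj.symm, ?_, ?_⟩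
      · rw [hKt]; exact hrJ
      · intro h2k
        have hpc := (pC (j.natAbs - 1) (by omega) (by omega)).2
        rw [show j.natAbs - 1 + 1 = j.natAbs from by omega, hRJ, hrJ] at hpc
        rw [hKt]
        linarith
  · -- ### backward direction
    rintro (⟨ha1, ha2, rfl, hr, hextra⟩ | ⟨hb1, hb2, rfl, hr, hs⟩ | ⟨hkeq, hjeq, hr, hs⟩)
    · -- case (a) : j = j, 1 ≤ j ≤ m+1
      have hkpos : 0 < j := by omega
      have hK1 : 1 ≤ j.toNat := by omega
      have hKm : j.toNat ≤ m+1 := by omega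
      have hLK : lamShift j lam j.toNat = lam j.toNat + 1 := by
        have h := lamShift_pos hkpos lam
        rwa [show j.natAbs = j.toNat from by omega] at h
      have hRK : lamShift j (q (2*m+2)) j.toNat = q (2*m+2) j.toNat + 1 := by
        have h := lamShift_pos hkpos (q (2*m+2))
        rwa [show j.natAbs = j.toNat from by omega] at h
      have hLt : ∀ t, t ≠ j.toNat → lamShift j lam t = lam t :=
        fun t ht => lamShift_ne _ _ (by omega)
      have hRt : ∀ t, t ≠ j.toNat → lamShift j (q (2*m+2)) t = q (2*m+2) t :=
        fun t ht => lamShift_ne _ _ (by omega)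
      have hextra' : 2 ≤ j.toNat → lam j.toNat + 1 ≤ q (2*m+1) (j.toNat - 1) := by
        intro h2
        refine hstep ?_ (hextra (by omega))
        exact dneg (dgen (2*m+1) (Or.inl rfl) (j.toNat - 1) (by omega) (by omega)
          j.toNat (by omega) (by omega)).1
      refine ⟨⟨?_, ?_, ?_, ?_⟩, ?_⟩
      · intro t h1 h2
        by_cases ht1 : t = j.toNat
        · subst ht1
          constructor
          · rw [hLK, hRK, hr]
          · rw [hRK, hr, hLt (j.toNat+1) (by omega)]
            have := hdec j.toNat h1 (by omega)
            linarith
        · by_cases ht2 : t + 1 = j.toNat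
          · constructor
            · rw [hLt t ht1, hRt t ht1]; exact (bA t h1 h2).1
            · rw [hRt t ht1, ht2, hLK]
              have hcs := (bC t h1 (by omega)).1
              have hxx := hextra' (by omega)
              rw [show j.toNat - 1 = t from by omega] at hxx
              linarith
          · rw [hLt t ht1, hRt t ht1, hLt (t+1) ht2]
            exact bA t h1 h2
      · by_cases hKm1 : j.toNat = m+1
        · have hL1 : lamShift j lam (m+1) = lam (m+1) + 1 := by rw [← hKm1]; exact hLK
          have hR1 : lamShift j (q (2*m+2)) (m+1) = q (2*m+2) (m+1) + 1 := by
            rw [← hKm1]; exact hRK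
          have hr1 : q (2*m+2) (m+1) = lam (m+1) := by rw [← hKm1]; exact hr
          constructor
          · rw [hL1, hR1, hr1]
          · rw [hR1, hr1, hLt (m+2) (by omega)]
            linarith [hlast']
        · constructor
          · rw [hLt (m+1) (by omega), hRt (m+1) (by omega)]; exact bB.1
          · rw [hRt (m+1) (by omega), hLt (m+2) (by omega)]; exact bB.2
      · intro t h1 h2
        by_cases ht1 : t = j.toNat
        · subst ht1
          constructor
          · rw [hRK]; linarith [(bC j.toNat h1 h2).1]
          · rw [hRt (j.toNat+1) (by omega)]; exact (bC j.toNat h1 h2).2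
        · by_cases ht2 : t + 1 = j.toNat
          · constructor
            · rw [hRt t ht1]; exact (bC t h1 h2).1
            · rw [ht2, hRK, hr]
              have hxx := hextra' (by omega)
              rw [show j.toNat - 1 = t from by omega] at hxx
              linarith
          · rw [hRt t ht1, hRt (t+1) ht2]; exact bC t h1 h2
      · by_cases hKm1 : j.toNat = m+1
        · have hR1 : lamShift j (q (2*m+2)) (m+1) = q (2*m+2) (m+1) + 1 := by
            rw [← hKm1]; exact hRK
          rw [hR1]
          exact ⟨by linarith [bD.1], by linarith [bD.2]⟩
        · rw [hRt (m+1) (by omega)]; exact bD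
      · rintro ⟨hA0, hB0, -, -⟩
        by_cases hKm1 : j.toNat ≤ m
        · have h := (hA0 j.toNat hK1 hKm1).1
          rw [hRK, hr] at h
          linarith
        · have h := hB0.1
          have hR1 : lamShift j (q (2*m+2)) (m+1) = q (2*m+2) (m+1) + 1 := by
            rw [show (m+1 : ℕ) = j.toNat from by omega]; exact hRK
          rw [hR1, show (m+1 : ℕ) = j.toNat from by omega, hr] at h
          linarith
    · -- case (b) : j = k + 1, -(m+1) ≤ k ≤ -2
      have hkneg : k < 0 := by omega
      have hjneg : k + 1 < 0 := by omega
      have hK2 : 2 ≤ (-k).toNat := by omega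
      have hKm : (-k).toNat ≤ m+1 := by omega
      have hRJ : lamShift (k+1) (q (2*m+2)) ((-k).toNat - 1)
          = q (2*m+2) ((-k).toNat - 1) - 1 := by
        have h := lamShift_neg hjneg (q (2*m+2))
        rwa [show (k+1).natAbs = (-k).toNat - 1 from by omega] at h
      have hRt : ∀ t, t ≠ (-k).toNat - 1 →
          lamShift (k+1) (q (2*m+2)) t = q (2*m+2) t :=
        fun t ht => lamShift_ne _ _ (by omega)
      have hLK : lamShift k lam ((-k).toNat) = lam ((-k).toNat) - 1 := by
        have h := lamShift_neg hkneg lam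
        rwa [show k.natAbs = (-k).toNat from by omega] at h
      have hLt : ∀ t, t ≠ (-k).toNat → lamShift k lam t = lam t :=
        fun t ht => lamShift_ne _ _ (by omega)
      have hs' : q (2*m+1) ((-k).toNat - 1) + 1 ≤ lam ((-k).toNat) :=
        hstep ((dgen (2*m+1) (Or.inl rfl) ((-k).toNat - 1) (by omega) (by omega)
          ((-k).toNat) (by omega) (by omega)).1) hs
      have hrK : q (2*m+2) ((-k).toNat) ≤ lam ((-k).toNat) - 1 := by
        have h1 := (bC ((-k).toNat - 1) (by omega) (by omega)).2
        rw [show (-k).toNat - 1 + 1 = (-k).toNat from by omega] at h1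
        linarith
      refine ⟨⟨?_, ?_, ?_, ?_⟩, ?_⟩
      · intro t h1 h2
        by_cases ht1 : t = (-k).toNat - 1
        · subst ht1
          constructor
          · rw [hRJ, hLt _ (by omega)]
            linarith [(bA _ h1 h2).1]
          · rw [hRJ, hr, show (-k).toNat - 1 + 1 = (-k).toNat from by omega, hLK]
        · by_cases ht2 : t = (-k).toNat
          · subst ht2
            constructor
            · rw [hRt _ (by omega), hLK]
              linarith [hrK]
            · rw [hRt _ (by omega), hLt _ (by omega)]
              exact (bA _ h1 h2).2
          · constructor
            · rw [hRt t ht1, hLt t (by omega)]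
              exact (bA t h1 h2).1
            · rw [hRt t ht1]
              by_cases ht3 : t + 1 = (-k).toNat
              · rw [ht3, hLK]
                have h := (bA t h1 h2).2
                rw [ht3] at h
                linarith
              · rw [hLt (t+1) ht3]
                exact (bA t h1 h2).2
      · by_cases hKm1 : (-k).toNat = m+1
        · constructor
          · rw [hRt (m+1) (by omega), show (m+1 : ℕ) = (-k).toNat from hKm1.symm, hLK]
            linarith [hrK]
          · rw [hRt (m+1) (by omega), hLt (m+2) (by omega)]
            exact bB.2
        · constructor
          · rw [hRt (m+1) (by omega), hLt (m+1) (by omega)]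
            exact bB.1
          · rw [hRt (m+1) (by omega), hLt (m+2) (by omega)]
            exact bB.2
      · intro t h1 h2
        by_cases ht1 : t = (-k).toNat - 1
        · subst ht1
          constructor
          · rw [hRJ, hr]; linarith
          · rw [hRt _ (by omega)]
            exact (bC _ h1 h2).2
        · constructor
          · rw [hRt t ht1]; exact (bC t h1 h2).1
          · by_cases ht3 : t + 1 = (-k).toNat - 1
            · rw [ht3, hRJ]
              have h := (bC t h1 h2).2
              rw [ht3] at h
              linarith
            · rw [hRt (t+1) ht3]
              exact (bC t h1 h2).2
      · rw [hRt (m+1) (by omega)]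
        exact bD
      · rintro ⟨hA0, -, -, -⟩
        have h := (hA0 ((-k).toNat - 1) (by omega) (by omega)).2
        rw [hRJ, hr, show (-k).toNat - 1 + 1 = (-k).toNat from by omega] at h
        linarith
    · -- case (c)
      have hs1 : |q (2*m+1) (m+1)| + 1 ≤ |lam (m+2)| := hstep dabssl hs
      have hjneg : j < 0 := by omega
      have hjn : j.natAbs = m+1 := by omega
      have hRJ : lamShift j (q (2*m+2)) (m+1) = q (2*m+2) (m+1) - 1 := by
        have h := lamShift_neg hjneg (q (2*m+2))
        rwa [hjn] at h
      have hRt : ∀ t, t ≠ m+1 → lamShift j (q (2*m+2)) t = q (2*m+2) t :=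
        fun t ht => lamShift_ne _ _ (by omega)
      obtain ⟨hkn, habs⟩ : k.natAbs = m+2 ∧
          |lamShift k lam (m+2)| = |lam (m+2)| - 1 := by
        rcases hne.lt_or_gt with hLneg | hLpos
        · have hsq : sgnq (lam (m+2)) = -1 := by
            unfold sgnq; rw [if_neg (not_lt.mpr hLneg.le)]
          rw [hsq] at hkeq
          have hke : k = ((m+2 : ℕ) : ℤ) := by rw [hkeq]; ring
          have hkn : k.natAbs = m+2 := by omega
          have hkpos : 0 < k := by omega
          have hL2 : lamShift k lam (m+2) = lam (m+2) + 1 := by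
            have h := lamShift_pos hkpos lam
            rwa [hkn] at h
          have hge1 : lam (m+2) ≤ -1 := by
            have := abs_nonneg (q (2*m+1) (m+1))
            rw [abs_of_neg hLneg] at hs1
            linarith
          refine ⟨hkn, ?_⟩
          rw [hL2, abs_of_neg hLneg, abs_of_nonpos (by linarith : lam (m+2) + 1 ≤ 0)]
          ring
        · have hsq : sgnq (lam (m+2)) = 1 := by
            unfold sgnq; rw [if_pos hLpos]
          rw [hsq] at hkeq
          have hke : k = -((m+2 : ℕ) : ℤ) := by rw [hkeq]; ring
          have hkn : k.natAbs = m+2 := by omega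
          have hkneg : k < 0 := by omega
          have hL2 : lamShift k lam (m+2) = lam (m+2) - 1 := by
            have h := lamShift_neg hkneg lam
            rwa [hkn] at h
          have hge1 : (1:ℚ) ≤ lam (m+2) := by
            have := abs_nonneg (q (2*m+1) (m+1))
            rw [abs_of_pos hLpos] at hs1
            linarith
          refine ⟨hkn, ?_⟩
          rw [hL2, abs_of_pos hLpos, abs_of_nonneg (by linarith : (0:ℚ) ≤ lam (m+2) - 1)]
      have hLt : ∀ t, t ≤ m+1 → lamShift k lam t = lam t :=
        fun t ht => lamShift_ne _ _ (by omega)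
      have hL2' : |lamShift k lam (m+2)| = |lam (m+2)| - 1 := habs
      refine ⟨⟨?_, ?_, ?_, ?_⟩, ?_⟩
      · intro t h1 h2
        rw [hRt t (by omega), hLt t (by omega), hLt (t+1) (by omega)]
        exact bA t h1 h2
      · constructor
        · rw [hLt (m+1) (by omega), hRJ, hr]
          linarith [hlast']
        · rw [hRJ, hr, hL2']
      · intro t h1 h2
        constructor
        · rw [hRt t (by omega)]; exact (bC t h1 h2).1
        · by_cases ht3 : t + 1 = m+1
          · rw [ht3, hRJ]
            have h := (bC t h1 h2).2
            rw [ht3] at h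
            linarith
          · rw [hRt (t+1) ht3]
            exact (bC t h1 h2).2
      · rw [hRJ, hr]
        constructor
        · linarith [le_abs_self (q (2*m+1) (m+1))]
        · linarith [neg_abs_le (q (2*m+1) (m+1))]
      · rintro ⟨-, hB0, -, -⟩
        have h := hB0.2
        rw [hRJ, hr] at h
        linarith
end

section
/- Let n ≥ 2. A subset P ⊆ Δ is a positive system of Δ containing Δ_c^+ if and only if P = Δ_{m,+}^+ for some 1 ≤ m ≤ n+1 or P = Δ_{m,−}^+ for some 1 ≤ m ≤ n+1. Moreover, these 2n+2 sets are pairwise distinct; in particular there are exactly 2n+2 positive systems of Δ containing Δ_c^+. -/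
/-- The standard basis vector `e_i` of `ℝ^{n+1}` (indices `0,…,n` correspond to `1,…,n+1`). -/
def ee (n : ℕ) (i : Fin (n + 1)) : Fin (n + 1) → ℝ := Pi.single i 1

/-- `Δ = {±e_i ± e_j : 1 ≤ i < j ≤ n+1}`. -/
def Delta (n : ℕ) : Set (Fin (n + 1) → ℝ) :=
  {v | ∃ i j : Fin (n + 1), i < j ∧
    (v = ee n i + ee n j ∨ v = ee n i - ee n j ∨
     v = -ee n i + ee n j ∨ v = -ee n i - ee n j)}

/-- `Δ_c⁺ = {e_i − e_j, e_i + e_j : 1 ≤ i < j ≤ n}`. -/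
def DeltaC (n : ℕ) : Set (Fin (n + 1) → ℝ) :=
  {v | ∃ i j : Fin (n + 1), i < j ∧ (j : ℕ) < n ∧
    (v = ee n i - ee n j ∨ v = ee n i + ee n j)}

/-- `Δ_{m,+}⁺` for `1 ≤ m ≤ n+1`. -/
def DeltaP (n m : ℕ) : Set (Fin (n + 1) → ℝ) :=
  DeltaC n ∪
  {v | ∃ i : Fin (n + 1), (i : ℕ) + 2 ≤ m ∧
    (v = ee n i + ee n (Fin.last n) ∨ v = ee n i - ee n (Fin.last n))} ∪
  {v | ∃ i : Fin (n + 1), m ≤ (i : ℕ) + 1 ∧ (i : ℕ) < n ∧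
    (v = ee n (Fin.last n) + ee n i ∨ v = ee n (Fin.last n) - ee n i)}

/-- `Δ_{m,−}⁺` for `1 ≤ m ≤ n+1` (the case `m = n+1` is special). -/
def DeltaM (n m : ℕ) : Set (Fin (n + 1) → ℝ) :=
  if m = n + 1 then
    DeltaC n ∪
    {v | ∃ i : Fin (n + 1), (i : ℕ) + 2 ≤ n ∧
      (v = ee n i + ee n (Fin.last n) ∨ v = ee n i - ee n (Fin.last n))} ∪
    {v | v = -ee n ⟨n - 1, by omega⟩ + ee n (Fin.last n) ∨
         v = -ee n ⟨n - 1, by omega⟩ - ee n (Fin.last n)}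
  else
    DeltaC n ∪
    {v | ∃ i : Fin (n + 1), (i : ℕ) + 2 ≤ m ∧
      (v = ee n i + ee n (Fin.last n) ∨ v = ee n i - ee n (Fin.last n))} ∪
    {v | ∃ i : Fin (n + 1), m ≤ (i : ℕ) + 1 ∧ (i : ℕ) < n ∧
      (v = -ee n (Fin.last n) + ee n i ∨ v = -ee n (Fin.last n) - ee n i)}

/-- A positive system of `Δ`: for each `α ∈ Δ` exactly one of `α, −α` belongs to `P`, and
`P` is closed under addition of roots within `Δ`. -/
def IsPosSystem (n : ℕ) (P : Set (Fin (n + 1) → ℝ)) : Prop :=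
  P ⊆ Delta n ∧
  (∀ v ∈ Delta n, Xor' (v ∈ P) (-v ∈ P)) ∧
  (∀ v ∈ P, ∀ w ∈ P, v + w ∈ Delta n → v + w ∈ P)

namespace S5
variable {n : ℕ}

noncomputable def sg (b : Bool) : ℝ := if b then 1 else -1

noncomputable def rt (n : ℕ) (s : Bool) (i : Fin (n+1)) (t : Bool) (j : Fin (n+1)) :
    Fin (n + 1) → ℝ := sg s • ee n i + sg t • ee n j

lemma sg_pos_or (b : Bool) : sg b = 1 ∨ sg b = -1 := by cases b <;> simp [sg]

lemma sg_ne_zero (b : Bool) : sg b ≠ 0 := by cases b <;> norm_num [sg]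

lemma sg_inj {b b' : Bool} (h : sg b = sg b') : b = b' := by
  cases b <;> cases b' <;> simp_all [sg] <;> norm_num at h

lemma rt_tt (i j : Fin (n+1)) : rt n true i true j = ee n i + ee n j := by
  simp [rt, sg]

lemma rt_tf (i j : Fin (n+1)) : rt n true i false j = ee n i - ee n j := by
  simp [rt, sg]; try module

lemma rt_ft (i j : Fin (n+1)) : rt n false i true j = -ee n i + ee n j := by
  simp [rt, sg]; try module

lemma rt_ff (i j : Fin (n+1)) : rt n false i false j = -ee n i - ee n j := by
  simp [rt, sg]; try module

lemma neg_rt (s t : Bool) (i j : Fin (n+1)) : -(rt n s i t j) = rt n (!s) i (!t) j := by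
  cases s <;> cases t <;> simp [rt_tt, rt_tf, rt_ft, rt_ff] <;> try module

lemma mem_Delta_iff {v : Fin (n+1) → ℝ} :
    v ∈ Delta n ↔ ∃ i j : Fin (n+1), i < j ∧ ∃ s t, v = rt n s i t j := by
  simp only [Delta, Set.mem_setOf_eq, Bool.exists_bool, rt_tt, rt_tf, rt_ft, rt_ff]
  constructor
  · rintro ⟨i, j, h, H⟩; exact ⟨i, j, h, by tauto⟩
  · rintro ⟨i, j, h, H⟩; exact ⟨i, j, h, by tauto⟩

lemma rt_mem_Delta {i j : Fin (n+1)} (h : i < j) (s t : Bool) : rt n s i t j ∈ Delta n :=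
  mem_Delta_iff.2 ⟨i, j, h, s, t, rfl⟩

lemma rt_apply (s t : Bool) (i j k : Fin (n+1)) :
    rt n s i t j k = (if k = i then sg s else 0) + (if k = j then sg t else 0) := by
  simp [rt, ee, Pi.single_apply, mul_ite]

lemma rt_inj {s t s' t' : Bool} {i j k l : Fin (n+1)} (hij : i < j) (hkl : k < l)
    (h : rt n s i t j = rt n s' k t' l) : s = s' ∧ i = k ∧ t = t' ∧ j = l := by
  have hne : i ≠ j := ne_of_lt hij
  have hne' : k ≠ l := ne_of_lt hkl
  have hik : i = k := by
    by_contra hik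
    have h1 := congrFun h i
    rw [rt_apply, rt_apply] at h1
    simp only [if_pos rfl, if_neg hne, if_neg hik, add_zero, zero_add] at h1
    by_cases hil : i = l
    · rw [if_pos hil] at h1
      have h2 := congrFun h k
      rw [rt_apply, rt_apply] at h2
      simp only [if_neg (Ne.symm hik), if_pos rfl, if_neg hne', zero_add, add_zero] at h2
      by_cases hkj : k = j
      · have hjl : j < l := by rwa [hkj] at hkl
        have : i < l := lt_trans hij hjl
        rw [hil] at this
        exact lt_irrefl _ this
      · rw [if_neg hkj] at h2; exact sg_ne_zero s' h2.symm
    · rw [if_neg hil] at h1; exact sg_ne_zero s h1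
  subst hik
  have hjl : j = l := by
    by_contra hjl
    have h1 := congrFun h j
    rw [rt_apply, rt_apply] at h1
    simp only [if_neg (Ne.symm hne), if_pos rfl, if_neg hjl, zero_add, add_zero] at h1
    exact sg_ne_zero t h1
  subst hjl
  have h1 := congrFun h i
  have h2 := congrFun h j
  rw [rt_apply, rt_apply] at h1 h2
  simp only [if_pos rfl, if_neg hne, if_neg (Ne.symm hne), add_zero, zero_add] at h1 h2
  exact ⟨sg_inj h1, rfl, sg_inj h2, rfl⟩


-- commuted forms
lemma eq5 (i j : Fin (n+1)) : ee n j + ee n i = rt n true i true j := by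
  rw [rt_tt]; abel
lemma eq6 (i j : Fin (n+1)) : ee n j - ee n i = rt n false i true j := by
  rw [rt_ft]; abel
lemma eq7 (i j : Fin (n+1)) : -ee n j + ee n i = rt n true i false j := by
  rw [rt_tf]; abel
lemma eq8 (i j : Fin (n+1)) : -ee n j - ee n i = rt n false i false j := by
  rw [rt_ff]; abel

noncomputable def F (c v : Fin (n+1) → ℝ) : ℝ := ∑ k, c k * v k

lemma F_add (c v w : Fin (n+1) → ℝ) : F c (v + w) = F c v + F c w := by
  simp [F, mul_add, Finset.sum_add_distrib]

lemma F_neg (c v : Fin (n+1) → ℝ) : F c (-v) = -F c v := by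
  simp [F, Finset.sum_neg_distrib]

lemma F_rt (c : Fin (n+1) → ℝ) (s t : Bool) {i j : Fin (n+1)} (hij : i ≠ j) :
    F c (rt n s i t j) = sg s * c i + sg t * c j := by
  have : ∀ k, c k * rt n s i t j k =
      (if k = i then sg s * c i else 0) + (if k = j then sg t * c j else 0) := by
    intro k
    rw [rt_apply]
    by_cases h1 : k = i <;> by_cases h2 : k = j <;> subst_vars <;> simp_all <;> ring
  rw [F]
  simp only [this, Finset.sum_add_distrib, Finset.sum_ite_eq', Finset.mem_univ, if_pos]

lemma p3 {a b : ℕ} (h : b < a) : (3:ℝ)^b + 1 < 3^a := by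
  have h1 : (3:ℝ)^(b+1) ≤ 3^a := pow_le_pow_right₀ (by norm_num) h
  have h2 : (1:ℝ) ≤ 3^b := one_le_pow₀ (by norm_num)
  rw [pow_succ] at h1
  nlinarith

lemma p3' {a b : ℕ} (h : b < a) : (3:ℝ)^b < 3^a := by
  have := p3 h
  have h2 : (0:ℝ) < 3^b := by positivity
  linarith

lemma p3le {a b : ℕ} (h : b ≤ a) : (3:ℝ)^b ≤ 3^a := pow_le_pow_right₀ (by norm_num) h

lemma p3pos (b : ℕ) : (0:ℝ) < 3^b := by positivity

-- generic positive-system criterion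
lemma isPos_of (S : Set (Fin (n+1) → ℝ)) (c : Fin (n+1) → ℝ)
    (h1 : ∀ v ∈ S, v ∈ Delta n ∧ 0 < F c v)
    (h2 : ∀ v ∈ Delta n, v ∈ S ∨ -v ∈ S) : IsPosSystem n S := by
  refine ⟨fun v hv => (h1 v hv).1, fun v hv => ?_, fun v hv w hw hvw => ?_⟩
  · rcases h2 v hv with h | h
    · refine Or.inl ⟨h, fun hneg => ?_⟩
      have := (h1 v h).2
      have := (h1 _ hneg).2
      rw [F_neg] at this
      linarith
    · refine Or.inr ⟨h, fun hpos => ?_⟩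
      have := (h1 _ h).2
      have := (h1 v hpos).2
      rw [F_neg] at *
      linarith
  · rcases h2 _ hvw with h | h
    · exact h
    · exfalso
      have hv' := (h1 v hv).2
      have hw' := (h1 w hw).2
      have := (h1 _ h).2
      rw [F_neg, F_add] at this
      linarith

lemma eq_of_posSubset {P Q : Set (Fin (n+1) → ℝ)} (hP : IsPosSystem n P)
    (hQ : IsPosSystem n Q) (h : P ⊆ Q) : P = Q := by
  ext v
  refine ⟨fun hv => h hv, fun hv => ?_⟩
  have hvD : v ∈ Delta n := hQ.1 hv
  rcases hP.2.1 v hvD with ⟨h1, _⟩ | ⟨h1, h2⟩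
  · exact h1
  · exfalso
    rcases hQ.2.1 v hvD with ⟨_, hnv⟩ | ⟨_, hnv⟩
    · exact hnv (h h1)
    · exact hnv hv

lemma mem_DeltaC_iff {v : Fin (n+1) → ℝ} :
    v ∈ DeltaC n ↔ ∃ i j : Fin (n+1), i < j ∧ (j : ℕ) < n ∧ ∃ t, v = rt n true i t j := by
  constructor
  · rintro ⟨i, j, h1, h2, h3 | h3⟩
    · exact ⟨i, j, h1, h2, false, by rw [rt_tf]; exact h3⟩
    · exact ⟨i, j, h1, h2, true, by rw [rt_tt]; exact h3⟩
  · rintro ⟨i, j, h1, h2, t, h3⟩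
    cases t
    · exact ⟨i, j, h1, h2, Or.inl (by rw [← rt_tf]; exact h3)⟩
    · exact ⟨i, j, h1, h2, Or.inr (by rw [← rt_tt]; exact h3)⟩

lemma mem_DeltaP_iff {m : ℕ} {v : Fin (n+1) → ℝ} :
    v ∈ DeltaP n m ↔
      v ∈ DeltaC n ∨
      (∃ i : Fin (n+1), (i : ℕ) + 2 ≤ m ∧ ∃ t, v = rt n true i t (Fin.last n)) ∨
      (∃ i : Fin (n+1), m ≤ (i : ℕ) + 1 ∧ (i : ℕ) < n ∧
        (v = rt n true i true (Fin.last n) ∨ v = rt n false i true (Fin.last n))) := by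
  constructor
  · rintro ((h | ⟨i, h1, h2 | h2⟩) | ⟨i, h1, h2, h3 | h3⟩)
    · exact Or.inl h
    · exact Or.inr (Or.inl ⟨i, h1, true, by rw [rt_tt]; exact h2⟩)
    · exact Or.inr (Or.inl ⟨i, h1, false, by rw [rt_tf]; exact h2⟩)
    · exact Or.inr (Or.inr ⟨i, h1, h2, Or.inl (by rw [← eq5]; exact h3)⟩)
    · exact Or.inr (Or.inr ⟨i, h1, h2, Or.inr (by rw [← eq6]; exact h3)⟩)
  · rintro (h | ⟨i, h1, t, h2⟩ | ⟨i, h1, h2, h3 | h3⟩)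
    · exact Or.inl (Or.inl h)
    · cases t
      · exact Or.inl (Or.inr ⟨i, h1, Or.inr (by rw [← rt_tf]; exact h2)⟩)
      · exact Or.inl (Or.inr ⟨i, h1, Or.inl (by rw [← rt_tt]; exact h2)⟩)
    · exact Or.inr ⟨i, h1, h2, Or.inl (by rw [eq5]; exact h3)⟩
    · exact Or.inr ⟨i, h1, h2, Or.inr (by rw [eq6]; exact h3)⟩

lemma mem_DeltaM_iff {m : ℕ} (hm : m ≤ n) {v : Fin (n+1) → ℝ} :
    v ∈ DeltaM n m ↔
      v ∈ DeltaC n ∨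
      (∃ i : Fin (n+1), (i : ℕ) + 2 ≤ m ∧ ∃ t, v = rt n true i t (Fin.last n)) ∨
      (∃ i : Fin (n+1), m ≤ (i : ℕ) + 1 ∧ (i : ℕ) < n ∧
        (v = rt n true i false (Fin.last n) ∨ v = rt n false i false (Fin.last n))) := by
  rw [DeltaM, if_neg (by omega)]
  constructor
  · rintro ((h | ⟨i, h1, h2 | h2⟩) | ⟨i, h1, h2, h3 | h3⟩)
    · exact Or.inl h
    · exact Or.inr (Or.inl ⟨i, h1, true, by rw [rt_tt]; exact h2⟩)
    · exact Or.inr (Or.inl ⟨i, h1, false, by rw [rt_tf]; exact h2⟩)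
    · exact Or.inr (Or.inr ⟨i, h1, h2, Or.inl (by rw [← eq7]; exact h3)⟩)
    · exact Or.inr (Or.inr ⟨i, h1, h2, Or.inr (by rw [← eq8]; exact h3)⟩)
  · rintro (h | ⟨i, h1, t, h2⟩ | ⟨i, h1, h2, h3 | h3⟩)
    · exact Or.inl (Or.inl h)
    · cases t
      · exact Or.inl (Or.inr ⟨i, h1, Or.inr (by rw [← rt_tf]; exact h2)⟩)
      · exact Or.inl (Or.inr ⟨i, h1, Or.inl (by rw [← rt_tt]; exact h2)⟩)
    · exact Or.inr ⟨i, h1, h2, Or.inl (by rw [eq7]; exact h3)⟩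
    · exact Or.inr ⟨i, h1, h2, Or.inr (by rw [eq8]; exact h3)⟩

lemma mem_DeltaM_last_iff {v : Fin (n+1) → ℝ} :
    v ∈ DeltaM n (n+1) ↔
      v ∈ DeltaC n ∨
      (∃ i : Fin (n+1), (i : ℕ) + 2 ≤ n ∧ ∃ t, v = rt n true i t (Fin.last n)) ∨
      (v = rt n false ⟨n-1, by omega⟩ true (Fin.last n) ∨
       v = rt n false ⟨n-1, by omega⟩ false (Fin.last n)) := by
  rw [DeltaM, if_pos rfl]
  constructor
  · rintro ((h | ⟨i, h1, h2 | h2⟩) | (h3 | h3))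
    · exact Or.inl h
    · exact Or.inr (Or.inl ⟨i, h1, true, by rw [rt_tt]; exact h2⟩)
    · exact Or.inr (Or.inl ⟨i, h1, false, by rw [rt_tf]; exact h2⟩)
    · exact Or.inr (Or.inr (Or.inl (by rw [rt_ft]; exact h3)))
    · exact Or.inr (Or.inr (Or.inr (by rw [rt_ff]; exact h3)))
  · rintro (h | ⟨i, h1, t, h2⟩ | (h3 | h3))
    · exact Or.inl (Or.inl h)
    · cases t
      · exact Or.inl (Or.inr ⟨i, h1, Or.inr (by rw [← rt_tf]; exact h2)⟩)
      · exact Or.inl (Or.inr ⟨i, h1, Or.inl (by rw [← rt_tt]; exact h2)⟩)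
    · exact Or.inr (Or.inl (by rw [← rt_ft]; exact h3))
    · exact Or.inr (Or.inr (by rw [← rt_ff]; exact h3))

lemma lt_last {i : Fin (n+1)} (h : (i : ℕ) < n) : i < Fin.last n := by
  rw [Fin.lt_def, Fin.val_last]; exact h

lemma ne_last {i : Fin (n+1)} (h : (i : ℕ) < n) : i ≠ Fin.last n := ne_of_lt (lt_last h)

noncomputable def cP (n m : ℕ) : Fin (n+1) → ℝ :=
  fun i => if (i : ℕ) < n then 3^(n - (i:ℕ)) else 3^(n+1-m) + 1

noncomputable def cM (n m : ℕ) : Fin (n+1) → ℝ :=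
  fun i => if (i : ℕ) < n then 3^(n - (i:ℕ)) else -(3^(n+1-m) + 1)

noncomputable def cL (n : ℕ) : Fin (n+1) → ℝ :=
  fun i => if (i : ℕ) + 1 < n then 3^(n - (i:ℕ)) else if (i : ℕ) < n then -2 else 1

lemma boundC_aux (c : Fin (n+1) → ℝ) (hc : ∀ i : Fin (n+1), (i : ℕ) < n → c i = 3^(n - (i:ℕ)))
    {v : Fin (n+1) → ℝ} (hv : v ∈ DeltaC n) : v ∈ Delta n ∧ 0 < F c v := by
  obtain ⟨i, j, hij, hj, t, rfl⟩ := mem_DeltaC_iff.1 hv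
  have hij' : (i : ℕ) < (j : ℕ) := Fin.lt_def.1 hij
  refine ⟨rt_mem_Delta hij _ _, ?_⟩
  rw [F_rt _ _ _ (ne_of_lt hij), hc i (by omega), hc j hj]
  have key : (3:ℝ)^(n - (j:ℕ)) < 3^(n - (i:ℕ)) := p3' (by omega)
  have h1 := p3pos (n - (j:ℕ))
  cases t <;> simp [sg] <;> linarith

lemma boundP {m : ℕ} (hm1 : 1 ≤ m) (hm2 : m ≤ n + 1) :
    ∀ v ∈ DeltaP n m, v ∈ Delta n ∧ 0 < F (cP n m) v := by
  intro v hv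
  have hcP : ∀ i : Fin (n+1), (i : ℕ) < n → cP n m i = 3^(n - (i:ℕ)) := by
    intro i hi; simp [cP, hi]
  have hcPL : cP n m (Fin.last n) = 3^(n+1-m) + 1 := by simp [cP]
  rcases mem_DeltaP_iff.1 hv with h | ⟨i, him, t, rfl⟩ | ⟨i, him, hi, h | h⟩
  · exact boundC_aux _ hcP h
  · have hi : (i : ℕ) < n := by omega
    refine ⟨rt_mem_Delta (lt_last hi) _ _, ?_⟩
    rw [F_rt _ _ _ (ne_last hi), hcP i hi, hcPL]
    have key : (3:ℝ)^(n+1-m) + 1 < 3^(n - (i:ℕ)) := p3 (by omega)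
    have h1 := p3pos (n + 1 - m)
    cases t <;> simp [sg] <;> linarith
  all_goals {
    subst h
    refine ⟨rt_mem_Delta (lt_last hi) _ _, ?_⟩
    rw [F_rt _ _ _ (ne_last hi), hcP i hi, hcPL]
    have key : (3:ℝ)^(n - (i:ℕ)) ≤ 3^(n+1-m) := p3le (by omega)
    have h1 := p3pos (n - (i:ℕ))
    simp [sg]; linarith }

lemma boundM {m : ℕ} (hm1 : 1 ≤ m) (hm2 : m ≤ n) :
    ∀ v ∈ DeltaM n m, v ∈ Delta n ∧ 0 < F (cM n m) v := by
  intro v hv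
  have hcM : ∀ i : Fin (n+1), (i : ℕ) < n → cM n m i = 3^(n - (i:ℕ)) := by
    intro i hi; simp [cM, hi]
  have hcML : cM n m (Fin.last n) = -(3^(n+1-m) + 1) := by simp [cM]
  rcases (mem_DeltaM_iff hm2).1 hv with h | ⟨i, him, t, rfl⟩ | ⟨i, him, hi, h | h⟩
  · exact boundC_aux _ hcM h
  · have hi : (i : ℕ) < n := by omega
    refine ⟨rt_mem_Delta (lt_last hi) _ _, ?_⟩
    rw [F_rt _ _ _ (ne_last hi), hcM i hi, hcML]
    have key : (3:ℝ)^(n+1-m) + 1 < 3^(n - (i:ℕ)) := p3 (by omega)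
    have h1 := p3pos (n + 1 - m)
    cases t <;> simp [sg] <;> linarith
  all_goals {
    subst h
    refine ⟨rt_mem_Delta (lt_last hi) _ _, ?_⟩
    rw [F_rt _ _ _ (ne_last hi), hcM i hi, hcML]
    have key : (3:ℝ)^(n - (i:ℕ)) ≤ 3^(n+1-m) := p3le (by omega)
    have h1 := p3pos (n - (i:ℕ))
    simp [sg]; linarith }

lemma boundL (hn : 2 ≤ n) :
    ∀ v ∈ DeltaM n (n+1), v ∈ Delta n ∧ 0 < F (cL n) v := by
  intro v hv
  have hcL1 : ∀ i : Fin (n+1), (i : ℕ) + 1 < n → cL n i = 3^(n - (i:ℕ)) := by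
    intro i hi; simp [cL, hi]
  have hcL2 : cL n ⟨n-1, by omega⟩ = -2 := by
    simp only [cL]
    rw [if_neg (by omega), if_pos (by omega)]
  have hcL3 : cL n (Fin.last n) = 1 := by
    simp only [cL, Fin.val_last]
    rw [if_neg (by omega), if_neg (by omega)]
  rcases mem_DeltaM_last_iff.1 hv with h | ⟨i, him, t, rfl⟩ | h | h
  · obtain ⟨i, j, hij, hj, t, rfl⟩ := mem_DeltaC_iff.1 h
    have hij' : (i : ℕ) < (j : ℕ) := Fin.lt_def.1 hij
    refine ⟨rt_mem_Delta hij _ _, ?_⟩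
    rw [F_rt _ _ _ (ne_of_lt hij), hcL1 i (by omega)]
    by_cases hj1 : (j : ℕ) + 1 < n
    · rw [hcL1 j hj1]
      have key : (3:ℝ)^(n - (j:ℕ)) < 3^(n - (i:ℕ)) := p3' (by omega)
      have h1 := p3pos (n - (j:ℕ))
      cases t <;> simp [sg] <;> linarith
    · have hj2 : j = ⟨n-1, by omega⟩ := Fin.ext (by (try simp); omega)
      rw [hj2, hcL2]
      have key : (3:ℝ)^2 ≤ 3^(n - (i:ℕ)) := p3le (by omega)
      cases t <;> simp [sg] <;> nlinarith
  · have hi : (i : ℕ) + 1 < n := by omega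
    refine ⟨rt_mem_Delta (lt_last (by omega)) _ _, ?_⟩
    rw [F_rt _ _ _ (ne_last (by omega)), hcL1 i hi, hcL3]
    have key : (3:ℝ)^1 ≤ 3^(n - (i:ℕ)) := p3le (by omega)
    cases t <;> simp [sg] <;> nlinarith
  all_goals {
    subst h
    refine ⟨rt_mem_Delta (lt_last (by (try simp); omega)) _ _, ?_⟩
    rw [F_rt _ _ _ (ne_last (by (try simp); omega)), hcL2, hcL3]
    simp [sg]; try norm_num }

lemma j_eq_last {j : Fin (n+1)} (hj : ¬ (j : ℕ) < n) : j = Fin.last n :=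
  Fin.ext (by rw [Fin.val_last]; omega)

lemma cover_aux {S : Set (Fin (n+1) → ℝ)}
    (hcl : ∀ (i j : Fin (n+1)) (t : Bool), i < j → (rt n true i t j ∈ S ∨ rt n false i (!t) j ∈ S)) :
    ∀ v ∈ Delta n, v ∈ S ∨ -v ∈ S := by
  intro v hv
  obtain ⟨i, j, hij, s, t, rfl⟩ := mem_Delta_iff.1 hv
  rw [neg_rt]
  cases s
  · rcases hcl i j (!t) hij with h | h
    · exact Or.inr (by simpa using h)
    · exact Or.inl (by simpa using h)
  · simpa using hcl i j t hij

lemma coverP {m : ℕ} : ∀ v ∈ Delta n, v ∈ DeltaP n m ∨ -v ∈ DeltaP n m := by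
  apply cover_aux
  intro i j t hij
  by_cases hj : (j : ℕ) < n
  · exact Or.inl (mem_DeltaP_iff.2 (Or.inl (mem_DeltaC_iff.2 ⟨i, j, hij, hj, t, rfl⟩)))
  · have hjL : j = Fin.last n := j_eq_last hj
    subst hjL
    have hi : (i : ℕ) < n := by
      have := Fin.lt_def.1 hij; rwa [Fin.val_last] at this
    by_cases him : (i : ℕ) + 2 ≤ m
    · exact Or.inl (mem_DeltaP_iff.2 (Or.inr (Or.inl ⟨i, him, t, rfl⟩)))
    · have him' : m ≤ (i : ℕ) + 1 := by omega
      cases t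
      · exact Or.inr (mem_DeltaP_iff.2 (Or.inr (Or.inr ⟨i, him', hi, Or.inr rfl⟩)))
      · exact Or.inl (mem_DeltaP_iff.2 (Or.inr (Or.inr ⟨i, him', hi, Or.inl rfl⟩)))

lemma coverM {m : ℕ} (hm : m ≤ n) : ∀ v ∈ Delta n, v ∈ DeltaM n m ∨ -v ∈ DeltaM n m := by
  apply cover_aux
  intro i j t hij
  by_cases hj : (j : ℕ) < n
  · exact Or.inl ((mem_DeltaM_iff hm).2 (Or.inl (mem_DeltaC_iff.2 ⟨i, j, hij, hj, t, rfl⟩)))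
  · have hjL : j = Fin.last n := j_eq_last hj
    subst hjL
    have hi : (i : ℕ) < n := by
      have := Fin.lt_def.1 hij; rwa [Fin.val_last] at this
    by_cases him : (i : ℕ) + 2 ≤ m
    · exact Or.inl ((mem_DeltaM_iff hm).2 (Or.inr (Or.inl ⟨i, him, t, rfl⟩)))
    · have him' : m ≤ (i : ℕ) + 1 := by omega
      cases t
      · exact Or.inl ((mem_DeltaM_iff hm).2 (Or.inr (Or.inr ⟨i, him', hi, Or.inl rfl⟩)))
      · exact Or.inr ((mem_DeltaM_iff hm).2 (Or.inr (Or.inr ⟨i, him', hi, Or.inr rfl⟩)))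

lemma coverL (hn : 2 ≤ n) : ∀ v ∈ Delta n, v ∈ DeltaM n (n+1) ∨ -v ∈ DeltaM n (n+1) := by
  apply cover_aux
  intro i j t hij
  by_cases hj : (j : ℕ) < n
  · exact Or.inl (mem_DeltaM_last_iff.2 (Or.inl (mem_DeltaC_iff.2 ⟨i, j, hij, hj, t, rfl⟩)))
  · have hjL : j = Fin.last n := j_eq_last hj
    subst hjL
    have hi : (i : ℕ) < n := by
      have := Fin.lt_def.1 hij; rwa [Fin.val_last] at this
    by_cases him : (i : ℕ) + 2 ≤ n
    · exact Or.inl (mem_DeltaM_last_iff.2 (Or.inr (Or.inl ⟨i, him, t, rfl⟩)))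
    · have hieq : i = ⟨n-1, by omega⟩ := Fin.ext (by (try simp); omega)
      rw [hieq]
      cases t
      · exact Or.inr (mem_DeltaM_last_iff.2 (Or.inr (Or.inr (Or.inl rfl))))
      · exact Or.inr (mem_DeltaM_last_iff.2 (Or.inr (Or.inr (Or.inr rfl))))

lemma isPosP {m : ℕ} (hm1 : 1 ≤ m) (hm2 : m ≤ n + 1) : IsPosSystem n (DeltaP n m) :=
  isPos_of _ (cP n m) (boundP hm1 hm2) coverP

lemma isPosM {m : ℕ} (hn : 2 ≤ n) (hm1 : 1 ≤ m) (hm2 : m ≤ n + 1) :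
    IsPosSystem n (DeltaM n m) := by
  by_cases h : m = n + 1
  · subst h; exact isPos_of _ (cL n) (boundL hn) (coverL hn)
  · exact isPos_of _ (cM n m) (boundM hm1 (by omega)) (coverM (by omega))

lemma DeltaC_subset_P {m : ℕ} : DeltaC n ⊆ DeltaP n m :=
  fun v hv => mem_DeltaP_iff.2 (Or.inl hv)

lemma DeltaC_subset_M {m : ℕ} (hm2 : m ≤ n + 1) : DeltaC n ⊆ DeltaM n m := by
  by_cases h : m = n + 1
  · subst h; exact fun v hv => mem_DeltaM_last_iff.2 (Or.inl hv)
  · exact fun v hv => (mem_DeltaM_iff (by omega)).2 (Or.inl hv)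

lemma rt_sum1 (i j k : Fin (n+1)) (t : Bool) :
    rt n true i false j + rt n true j t k = rt n true i t k := by
  cases t <;> simp [rt_tt, rt_tf] <;> abel

lemma rt_sum2 (i j k : Fin (n+1)) :
    rt n false i false k + rt n false j true k = rt n false i false j := by
  simp [rt_ff, rt_ft]; abel

lemma rt_comm_ff (i j : Fin (n+1)) : rt n false i false j = rt n false j false i := by
  simp [rt_ff]; abel

open scoped Classical in
lemma forward (hn : 2 ≤ n) {P : Set (Fin (n+1) → ℝ)} (hP : IsPosSystem n P)
    (hC : DeltaC n ⊆ P) :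
    ∃ m : ℕ, 1 ≤ m ∧ m ≤ n + 1 ∧ (P ⊆ DeltaP n m ∨ P ⊆ DeltaM n m) := by
  set L := Fin.last n with hL
  have hxor := hP.2.1
  have hcl := hP.2.2
  have hCmem : ∀ (i j : Fin (n+1)) (t : Bool), i < j → (j : ℕ) < n → rt n true i t j ∈ P :=
    fun i j t hij hj => hC (mem_DeltaC_iff.2 ⟨i, j, hij, hj, t, rfl⟩)
  have hno : ∀ (i j : Fin (n+1)) (t : Bool), i < j → (j : ℕ) < n → rt n false i t j ∉ P := by
    intro i j t hij hj hmem
    have h1 : rt n true i (!t) j ∈ P := hCmem i j (!t) hij hj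
    have h2 := hxor _ (rt_mem_Delta hij true (!t))
    rw [neg_rt] at h2
    simp only [Bool.not_not, Bool.not_true] at h2
    rcases h2 with ⟨_, hb⟩ | ⟨_, hb⟩
    · exact hb hmem
    · exact hb h1
  have hnotboth : ∀ (s t : Bool) (i : Fin (n+1)), (i : ℕ) < n →
      rt n s i t L ∈ P → rt n (!s) i (!t) L ∈ P → False := by
    intro s t i hi h1 h2
    have h3 := hxor _ (rt_mem_Delta (lt_last hi) s t)
    rw [neg_rt] at h3
    rcases h3 with ⟨_, hb⟩ | ⟨_, hb⟩
    · exact hb h2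
    · exact hb h1
  have hnegmem : ∀ (s t : Bool) (i : Fin (n+1)), (i : ℕ) < n →
      rt n s i t L ∉ P → rt n (!s) i (!t) L ∈ P := by
    intro s t i hi hnot
    have h3 := hxor _ (rt_mem_Delta (lt_last hi) s t)
    rw [neg_rt] at h3
    rcases h3 with ⟨ha, _⟩ | ⟨ha, _⟩
    · exact absurd ha hnot
    · exact ha
  have mono : ∀ (i j : Fin (n+1)) (t : Bool), i < j → (j : ℕ) < n →
      rt n true j t L ∈ P → rt n true i t L ∈ P := by
    intro i j t hij hj hmem
    have hi : (i : ℕ) < n := lt_trans (Fin.lt_def.1 hij) hj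
    have h1 := hCmem i j false hij hj
    have := hcl _ h1 _ hmem (by rw [rt_sum1]; exact rt_mem_Delta (lt_last hi) _ _)
    rwa [rt_sum1] at this
  have excl : ∀ i j : Fin (n+1), (i : ℕ) < n → (j : ℕ) < n →
      rt n false i false L ∈ P → rt n false j true L ∈ P → i = j := by
    intro i j hi hj h1 h2
    by_contra hne
    rcases lt_or_gt_of_ne hne with hij | hij
    · have hs := hcl _ h1 _ h2 (by rw [rt_sum2]; exact rt_mem_Delta hij false false)
      rw [rt_sum2] at hs
      exact hno i j false hij hj hs
    · have hs := hcl _ h1 _ h2 (by rw [rt_sum2, rt_comm_ff]; exact rt_mem_Delta hij false false)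
      rw [rt_sum2, rt_comm_ff] at hs
      exact hno j i false hij hi hs
  -- index embedding
  set g : ℕ → Fin (n+1) := fun a => ⟨min a n, by omega⟩ with hg
  have hgval : ∀ a : ℕ, a ≤ n → ((g a : Fin (n+1)) : ℕ) = a := by
    intro a ha; simp [hg]; omega
  have hgi : ∀ i : Fin (n+1), g ((i : ℕ)) = i := by
    intro i; apply Fin.ext; exact hgval _ (by omega)
  -- the epsilon / delta thresholds
  set E : ℕ → Prop := fun a => rt n true (g a) true L ∈ P with hEdef
  set D : ℕ → Prop := fun a => rt n true (g a) false L ∈ P with hDdef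
  have monoE : ∀ a b : ℕ, a < b → b < n → E b → E a := by
    intro a b hab hb hEb
    exact mono (g a) (g b) true (Fin.lt_def.2 (by rw [hgval a (by omega), hgval b (by omega)]; exact hab)) (by rw [hgval b (by omega)]; exact hb) hEb
  have monoD : ∀ a b : ℕ, a < b → b < n → D b → D a := by
    intro a b hab hb hDb
    exact mono (g a) (g b) false (Fin.lt_def.2 (by rw [hgval a (by omega), hgval b (by omega)]; exact hab)) (by rw [hgval b (by omega)]; exact hb) hDb
  obtain ⟨mE, hE1, hEpos, hEneg⟩ :
      ∃ mE, mE ≤ n ∧ (∀ a, a < mE → E a) ∧ (∀ a, mE ≤ a → a < n → ¬E a) := by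
    by_cases hE : ∃ a, a < n ∧ ¬E a
    · refine ⟨Nat.find hE, (Nat.find_spec hE).1.le, fun a ha => ?_, fun a ha1 ha2 hEa => ?_⟩
      · have := Nat.find_min hE ha
        push_neg at this
        exact this (lt_of_lt_of_le ha (Nat.find_spec hE).1.le)
      · rcases eq_or_lt_of_le ha1 with h | h
        · exact (Nat.find_spec hE).2 (h ▸ hEa)
        · exact (Nat.find_spec hE).2 (monoE _ _ h ha2 hEa)
    · push_neg at hE
      exact ⟨n, le_refl n, fun a ha => hE a ha, fun a ha1 ha2 => absurd ha2 (not_lt.2 ha1)⟩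
  obtain ⟨mD, hD1, hDpos, hDneg⟩ :
      ∃ mD, mD ≤ n ∧ (∀ a, a < mD → D a) ∧ (∀ a, mD ≤ a → a < n → ¬D a) := by
    by_cases hD : ∃ a, a < n ∧ ¬D a
    · refine ⟨Nat.find hD, (Nat.find_spec hD).1.le, fun a ha => ?_, fun a ha1 ha2 hDa => ?_⟩
      · have := Nat.find_min hD ha
        push_neg at this
        exact this (lt_of_lt_of_le ha (Nat.find_spec hD).1.le)
      · rcases eq_or_lt_of_le ha1 with h | h
        · exact (Nat.find_spec hD).2 (h ▸ hDa)
        · exact (Nat.find_spec hD).2 (monoD _ _ h ha2 hDa)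
    · push_neg at hD
      exact ⟨n, le_refl n, fun a ha => hD a ha, fun a ha1 ha2 => absurd ha2 (not_lt.2 ha1)⟩
  -- trichotomy
  have trich : mE = n ∨ (mE < n ∧ mD = n) ∨
      (mE < n ∧ mD < n ∧ mE = n - 1 ∧ mD = n - 1) := by
    by_cases h1 : mE = n
    · exact Or.inl h1
    by_cases h2 : mD = n
    · exact Or.inr (Or.inl ⟨by omega, h2⟩)
    have hmE : mE < n := by omega
    have hmD : mD < n := by omega
    have hE' : rt n false (g mE) false L ∈ P := by
      have := hnegmem true true (g mE) (by rw [hgval _ (by omega)]; exact hmE)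
        (hEneg mE le_rfl hmE)
      simpa using this
    have hD' : ∀ a, mD ≤ a → a < n → rt n false (g a) true L ∈ P := by
      intro a ha1 ha2
      have := hnegmem true false (g a) (by rw [hgval _ (by omega)]; exact ha2)
        (hDneg a ha1 ha2)
      simpa using this
    have heq : mE = mD := by
      have := excl (g mE) (g mD) (by rw [hgval _ (by omega)]; exact hmE)
        (by rw [hgval _ (by omega)]; exact hmD) hE' (hD' mD le_rfl hmD)
      have := congrArg Fin.val this
      rwa [hgval _ (by omega), hgval _ (by omega)] at this
    by_cases h3 : mE = n - 1
    · exact Or.inr (Or.inr ⟨hmE, hmD, h3, by omega⟩)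
    · exfalso
      have hlt : mE + 1 < n := by omega
      have := excl (g mE) (g (mE+1)) (by rw [hgval _ (by omega)]; exact hmE)
        (by rw [hgval _ (by omega)]; exact hlt) hE' (hD' (mE+1) (by omega) hlt)
      have := congrArg Fin.val this
      rw [hgval _ (by omega), hgval _ (by omega)] at this
      omega
  -- helpers to read off membership info
  have memE : ∀ i : Fin (n+1), (i : ℕ) < n → rt n true i true L ∈ P → (i : ℕ) < mE := by
    intro i hi hv
    by_contra hcon
    exact hEneg _ (by omega) hi (by simp only [hEdef]; rw [hgi i]; exact hv)
  have memD : ∀ i : Fin (n+1), (i : ℕ) < n → rt n true i false L ∈ P → (i : ℕ) < mD := by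
    intro i hi hv
    by_contra hcon
    exact hDneg _ (by omega) hi (by simp only [hDdef]; rw [hgi i]; exact hv)
  have memE' : ∀ i : Fin (n+1), (i : ℕ) < n → rt n false i false L ∈ P → mE ≤ (i : ℕ) := by
    intro i hi hv
    by_contra hcon
    have hEi : rt n true i true L ∈ P := by
      have := hEpos (i:ℕ) (by omega)
      simp only [hEdef] at this; rwa [hgi i] at this
    exact hnotboth true true i hi hEi hv
  have memD' : ∀ i : Fin (n+1), (i : ℕ) < n → rt n false i true L ∈ P → mD ≤ (i : ℕ) := by
    intro i hi hv
    by_contra hcon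
    have hDi : rt n true i false L ∈ P := by
      have := hDpos (i:ℕ) (by omega)
      simp only [hDdef] at this; rwa [hgi i] at this
    exact hnotboth true false i hi hDi hv
  -- common preprocessing of an element of P
  have main : ∀ v ∈ P, ∃ (s t : Bool) (i j : Fin (n+1)), i < j ∧ v = rt n s i t j ∧
      (((j : ℕ) < n ∧ s = true) ∨ (j = L ∧ (i : ℕ) < n)) := by
    intro v hv
    obtain ⟨i, j, hij, s, t, rfl⟩ := mem_Delta_iff.1 (hP.1 hv)
    by_cases hj : (j : ℕ) < n
    · cases s
      · exact absurd hv (hno i j t hij hj)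
      · exact ⟨true, t, i, j, hij, rfl, Or.inl ⟨hj, rfl⟩⟩
    · have hjL : j = L := j_eq_last hj
      subst hjL
      have hi : (i : ℕ) < n := by
        have := Fin.lt_def.1 hij; rwa [Fin.val_last] at this
      exact ⟨s, t, i, L, hij, rfl, Or.inr ⟨rfl, hi⟩⟩
  rcases trich with hcase | ⟨hcase1, hcase2⟩ | ⟨hc1, hc2, hc3, hc4⟩
  · -- all epsilons positive : DeltaP (mD + 1)
    refine ⟨mD + 1, by omega, by omega, Or.inl ?_⟩
    intro v hv
    obtain ⟨s, t, i, j, hij, rfl, hcases⟩ := main v hv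
    rcases hcases with ⟨hj, hs⟩ | ⟨hjL, hi⟩
    · subst hs
      exact mem_DeltaP_iff.2 (Or.inl (mem_DeltaC_iff.2 ⟨i, j, hij, hj, t, rfl⟩))
    · subst hjL
      apply mem_DeltaP_iff.2
      cases s
      · cases t
        · -- rt false i false L ∈ P : impossible since all eps positive
          exfalso
          have hEi : rt n true i true L ∈ P := by
            have := hEpos _ (show (i:ℕ) < mE by omega)
            simp only [hEdef] at this; rwa [hgi i] at this
          exact hnotboth true true i hi hEi hv
        · -- rt false i true L ∈ P : third set
          have h1 := memD' i hi hv
          exact Or.inr (Or.inr ⟨i, by omega, hi, Or.inr rfl⟩)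
      · cases t
        · -- rt true i false L ∈ P : second set
          have h1 := memD i hi hv
          exact Or.inr (Or.inl ⟨i, by omega, false, rfl⟩)
        · -- rt true i true L ∈ P : second or third
          by_cases him : (i : ℕ) + 2 ≤ mD + 1
          · exact Or.inr (Or.inl ⟨i, him, true, rfl⟩)
          · exact Or.inr (Or.inr ⟨i, by omega, hi, Or.inl rfl⟩)
  · -- all deltas positive, mE < n : DeltaM (mE + 1)
    refine ⟨mE + 1, by omega, by omega, Or.inr ?_⟩
    intro v hv
    obtain ⟨s, t, i, j, hij, rfl, hcases⟩ := main v hv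
    rcases hcases with ⟨hj, hs⟩ | ⟨hjL, hi⟩
    · subst hs
      exact (mem_DeltaM_iff (by omega)).2
        (Or.inl (mem_DeltaC_iff.2 ⟨i, j, hij, hj, t, rfl⟩))
    · subst hjL
      apply (mem_DeltaM_iff (by omega)).2
      cases s
      · cases t
        · -- rt false i false L ∈ P : third set, need mE ≤ i
          have h1 := memE' i hi hv
          exact Or.inr (Or.inr ⟨i, by omega, hi, Or.inr rfl⟩)
        · -- rt false i true L ∈ P : impossible since all deltas positive
          exfalso
          have hDi : rt n true i false L ∈ P := by
            have := hDpos _ (show (i:ℕ) < mD by omega)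
            simp only [hDdef] at this; rwa [hgi i] at this
          exact hnotboth true false i hi hDi hv
      · cases t
        · -- rt true i false L ∈ P : second or third
          by_cases him : (i : ℕ) + 2 ≤ mE + 1
          · exact Or.inr (Or.inl ⟨i, him, false, rfl⟩)
          · exact Or.inr (Or.inr ⟨i, by omega, hi, Or.inl rfl⟩)
        · -- rt true i true L ∈ P : second set
          have h1 := memE i hi hv
          exact Or.inr (Or.inl ⟨i, by omega, true, rfl⟩)
  · -- mE = mD = n - 1 : DeltaM (n+1)
    refine ⟨n + 1, by omega, by omega, Or.inr ?_⟩
    intro v hv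
    obtain ⟨s, t, i, j, hij, rfl, hcases⟩ := main v hv
    rcases hcases with ⟨hj, hs⟩ | ⟨hjL, hi⟩
    · subst hs
      exact mem_DeltaM_last_iff.2 (Or.inl (mem_DeltaC_iff.2 ⟨i, j, hij, hj, t, rfl⟩))
    · subst hjL
      apply mem_DeltaM_last_iff.2
      cases s
      · have hieq : i = (⟨n-1, by omega⟩ : Fin (n+1)) → (rt n false i true L =
            rt n false (⟨n-1, by omega⟩ : Fin (n+1)) true L ∧ rt n false i false L =
            rt n false (⟨n-1, by omega⟩ : Fin (n+1)) false L) := by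
          intro h; rw [h]; exact ⟨rfl, rfl⟩
        cases t
        · -- rt false i false L : i ≥ mE = n-1 so i = n-1
          have h1 := memE' i hi hv
          have h2 : i = (⟨n-1, by omega⟩ : Fin (n+1)) := Fin.ext (by (try simp); omega)
          exact Or.inr (Or.inr (Or.inr (by rw [h2])))
        · -- rt false i true L : i ≥ mD = n-1 so i = n-1
          have h1 := memD' i hi hv
          have h2 : i = (⟨n-1, by omega⟩ : Fin (n+1)) := Fin.ext (by (try simp); omega)
          exact Or.inr (Or.inr (Or.inl (by rw [h2])))
      · cases t
        · have h1 := memD i hi hv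
          exact Or.inr (Or.inl ⟨i, by omega, false, rfl⟩)
        · have h1 := memE i hi hv
          exact Or.inr (Or.inl ⟨i, by omega, true, rfl⟩)

lemma part1 (hn : 2 ≤ n) (P : Set (Fin (n+1) → ℝ)) :
    (IsPosSystem n P ∧ DeltaC n ⊆ P) ↔
      ∃ m : ℕ, 1 ≤ m ∧ m ≤ n + 1 ∧ (P = DeltaP n m ∨ P = DeltaM n m) := by
  constructor
  · rintro ⟨hP, hC⟩
    obtain ⟨m, hm1, hm2, hsub | hsub⟩ := forward hn hP hC
    · exact ⟨m, hm1, hm2, Or.inl (eq_of_posSubset hP (isPosP hm1 hm2) hsub)⟩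
    · exact ⟨m, hm1, hm2, Or.inr (eq_of_posSubset hP (isPosM hn hm1 hm2) hsub)⟩
  · rintro ⟨m, hm1, hm2, rfl | rfl⟩
    · exact ⟨isPosP hm1 hm2, DeltaC_subset_P⟩
    · exact ⟨isPosM hn hm1 hm2, DeltaC_subset_M hm2⟩

lemma dP (hn : 2 ≤ n) {m m' : ℕ} (hm1 : 1 ≤ m) (hlt : m < m') (hm2 : m' ≤ n + 1) :
    DeltaP n m ≠ DeltaP n m' := by
  intro h
  have hmn : m ≤ n := by omega
  set w := rt n false (⟨m-1, by omega⟩ : Fin (n+1)) true (Fin.last n) with hw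
  have hwin : w ∈ DeltaP n m :=
    mem_DeltaP_iff.2 (Or.inr (Or.inr ⟨⟨m-1, by omega⟩, by simp; omega, by simp; omega,
      Or.inr rfl⟩))
  rw [h] at hwin
  rcases mem_DeltaP_iff.1 hwin with hc | ⟨i, h1, t, heq⟩ | ⟨i, h1, h2, heq | heq⟩
  · obtain ⟨i, j, hij, hj, t, heq⟩ := mem_DeltaC_iff.1 hc
    have := (rt_inj (lt_last (by (try simp); omega)) hij heq).1
    simp at this
  · have := (rt_inj (lt_last (by (try simp); omega)) (lt_last (by (try simp); omega)) heq).1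
    simp at this
  · have := (rt_inj (lt_last (by (try simp); omega)) (lt_last h2) heq).1
    simp at this
  · have := (rt_inj (lt_last (by (try simp); omega)) (lt_last h2) heq).2.1
    have hval := congrArg Fin.val this
    simp at hval
    omega

lemma dM (hn : 2 ≤ n) {m m' : ℕ} (hm1 : 1 ≤ m) (hlt : m < m') (hm2 : m' ≤ n) :
    DeltaM n m ≠ DeltaM n m' := by
  intro h
  have hmn : m ≤ n := by omega
  set w := rt n false (⟨m-1, by omega⟩ : Fin (n+1)) false (Fin.last n) with hw
  have hwin : w ∈ DeltaM n m :=
    (mem_DeltaM_iff hmn).2 (Or.inr (Or.inr ⟨⟨m-1, by omega⟩, by simp; omega, by simp; omega,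
      Or.inr rfl⟩))
  rw [h] at hwin
  rcases (mem_DeltaM_iff hm2).1 hwin with hc | ⟨i, h1, t, heq⟩ | ⟨i, h1, h2, heq | heq⟩
  · obtain ⟨i, j, hij, hj, t, heq⟩ := mem_DeltaC_iff.1 hc
    have := (rt_inj (lt_last (by (try simp); omega)) hij heq).1
    simp at this
  · have := (rt_inj (lt_last (by (try simp); omega)) (lt_last (by (try simp); omega)) heq).1
    simp at this
  · have := (rt_inj (lt_last (by (try simp); omega)) (lt_last h2) heq).1
    simp at this
  · have := (rt_inj (lt_last (by (try simp); omega)) (lt_last h2) heq).2.1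
    have hval := congrArg Fin.val this
    simp at hval
    omega

lemma dM2 (hn : 2 ≤ n) {m : ℕ} (hm1 : 1 ≤ m) (hm2 : m ≤ n) :
    DeltaM n m ≠ DeltaM n (n + 1) := by
  intro h
  set w := rt n true (⟨n-1, by omega⟩ : Fin (n+1)) false (Fin.last n) with hw
  have hwin : w ∈ DeltaM n m :=
    (mem_DeltaM_iff hm2).2 (Or.inr (Or.inr ⟨⟨n-1, by omega⟩, by simp; omega, by simp; omega,
      Or.inl rfl⟩))
  rw [h] at hwin
  rcases mem_DeltaM_last_iff.1 hwin with hc | ⟨i, h1, t, heq⟩ | heq | heq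
  · obtain ⟨i, j, hij, hj, t, heq⟩ := mem_DeltaC_iff.1 hc
    have := (rt_inj (lt_last (by (try simp); omega)) hij heq).2.2.2
    rw [← this, Fin.val_last] at hj
    omega
  · have := (rt_inj (lt_last (by (try simp); omega)) (lt_last (by omega)) heq).2.1
    have hval := congrArg Fin.val this
    simp at hval
    omega
  · have := (rt_inj (lt_last (by (try simp); omega)) (lt_last (by (try simp); omega)) heq).1
    simp at this
  · have := (rt_inj (lt_last (by (try simp); omega)) (lt_last (by (try simp); omega)) heq).1
    simp at this

lemma dPM (hn : 2 ≤ n) {m m' : ℕ} (hm1 : 1 ≤ m) (hm2 : m ≤ n + 1) (hm1' : 1 ≤ m')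
    (hm2' : m' ≤ n + 1) : DeltaP n m ≠ DeltaM n m' := by
  intro h
  set w := rt n false (⟨n-1, by omega⟩ : Fin (n+1)) false (Fin.last n) with hw
  have hwin : w ∈ DeltaM n m' := by
    by_cases hcase : m' = n + 1
    · subst hcase
      exact mem_DeltaM_last_iff.2 (Or.inr (Or.inr (Or.inr rfl)))
    · exact (mem_DeltaM_iff (by omega)).2
        (Or.inr (Or.inr ⟨⟨n-1, by omega⟩, by simp; omega, by simp; omega, Or.inr rfl⟩))
  rw [← h] at hwin
  rcases mem_DeltaP_iff.1 hwin with hc | ⟨i, h1, t, heq⟩ | ⟨i, h1, h2, heq | heq⟩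
  · obtain ⟨i, j, hij, hj, t, heq⟩ := mem_DeltaC_iff.1 hc
    have := (rt_inj (lt_last (by (try simp); omega)) hij heq).1
    simp at this
  · have := (rt_inj (lt_last (by (try simp); omega)) (lt_last (by (try simp); omega)) heq).1
    simp at this
  · have := (rt_inj (lt_last (by (try simp); omega)) (lt_last h2) heq).1
    simp at this
  · have := (rt_inj (lt_last (by (try simp); omega)) (lt_last h2) heq).2.2.1
    simp at this

lemma DeltaP_inj (hn : 2 ≤ n) {m m' : ℕ} (hm1 : 1 ≤ m) (hm2 : m ≤ n + 1) (hm1' : 1 ≤ m')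
    (hm2' : m' ≤ n + 1) (h : DeltaP n m = DeltaP n m') : m = m' := by
  rcases lt_trichotomy m m' with hlt | he | hlt
  · exact absurd h (dP hn hm1 hlt hm2')
  · exact he
  · exact absurd h.symm (dP hn hm1' hlt hm2)

lemma DeltaM_inj (hn : 2 ≤ n) {m m' : ℕ} (hm1 : 1 ≤ m) (hm2 : m ≤ n + 1) (hm1' : 1 ≤ m')
    (hm2' : m' ≤ n + 1) (h : DeltaM n m = DeltaM n m') : m = m' := by
  by_cases h1 : m = n + 1 <;> by_cases h2 : m' = n + 1
  · omega
  · exact absurd h.symm (h1 ▸ dM2 hn hm1' (by omega))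
  · exact absurd h (h2 ▸ dM2 hn hm1 (by omega))
  · rcases lt_trichotomy m m' with hlt | he | hlt
    · exact absurd h (dM hn hm1 hlt (by omega))
    · exact he
    · exact absurd h.symm (dM hn hm1' hlt (by omega))

end S5

/-- The positive systems of `Δ` containing `Δ_c⁺` are exactly the `2n+2` pairwise distinct
sets `Δ_{m,±}⁺`, `1 ≤ m ≤ n+1`. -/
theorem stmt5 (n : ℕ) (hn : 2 ≤ n) :
    (∀ P : Set (Fin (n + 1) → ℝ),
      (IsPosSystem n P ∧ DeltaC n ⊆ P) ↔
        ∃ m : ℕ, 1 ≤ m ∧ m ≤ n + 1 ∧ (P = DeltaP n m ∨ P = DeltaM n m)) ∧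
    (∀ m m' : ℕ, 1 ≤ m → m ≤ n + 1 → 1 ≤ m' → m' ≤ n + 1 →
      (DeltaP n m = DeltaP n m' → m = m') ∧
      (DeltaM n m = DeltaM n m' → m = m') ∧
      DeltaP n m ≠ DeltaM n m') ∧
    Set.ncard {P : Set (Fin (n + 1) → ℝ) | IsPosSystem n P ∧ DeltaC n ⊆ P} = 2 * n + 2 := by
  refine ⟨S5.part1 hn, fun m m' hm1 hm2 hm1' hm2' =>
    ⟨fun h => S5.DeltaP_inj hn hm1 hm2 hm1' hm2' h,
     fun h => S5.DeltaM_inj hn hm1 hm2 hm1' hm2' h,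
     S5.dPM hn hm1 hm2 hm1' hm2'⟩, ?_⟩
  have hset : {P : Set (Fin (n+1) → ℝ) | IsPosSystem n P ∧ DeltaC n ⊆ P} =
      (DeltaP n '' Set.Icc 1 (n+1)) ∪ (DeltaM n '' Set.Icc 1 (n+1)) := by
    ext P
    rw [Set.mem_setOf_eq, S5.part1 hn P]
    simp only [Set.mem_union, Set.mem_image, Set.mem_Icc]
    constructor
    · rintro ⟨m, h1, h2, h3 | h3⟩
      · exact Or.inl ⟨m, ⟨h1, h2⟩, h3.symm⟩
      · exact Or.inr ⟨m, ⟨h1, h2⟩, h3.symm⟩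
    · rintro (⟨m, ⟨h1, h2⟩, h3⟩ | ⟨m, ⟨h1, h2⟩, h3⟩)
      · exact ⟨m, h1, h2, Or.inl h3.symm⟩
      · exact ⟨m, h1, h2, Or.inr h3.symm⟩
  rw [hset]
  have hIcc : (Set.Icc 1 (n+1) : Set ℕ).ncard = n + 1 := by
    rw [← Finset.coe_Icc, Set.ncard_coe_finset, Nat.card_Icc]; omega
  have hfin : (Set.Icc 1 (n+1) : Set ℕ).Finite := Set.finite_Icc _ _
  have hinj1 : Set.InjOn (DeltaP n) (Set.Icc 1 (n+1)) :=
    fun a ha b hb h => S5.DeltaP_inj hn ha.1 ha.2 hb.1 hb.2 h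
  have hinj2 : Set.InjOn (DeltaM n) (Set.Icc 1 (n+1)) :=
    fun a ha b hb h => S5.DeltaM_inj hn ha.1 ha.2 hb.1 hb.2 h
  have hdisj : Disjoint (DeltaP n '' Set.Icc 1 (n+1)) (DeltaM n '' Set.Icc 1 (n+1)) := by
    rw [Set.disjoint_left]
    rintro A ⟨m, hm, rfl⟩ ⟨m', hm', he⟩
    exact S5.dPM hn hm.1 hm.2 hm'.1 hm'.2 he.symm
  rw [Set.ncard_union_eq hdisj (hfin.image _) (hfin.image _),
    Set.ncard_image_of_injOn hinj1, Set.ncard_image_of_injOn hinj2, hIcc]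
  omega
end

section
/- Let n ≥ 2 and let Λ ∈ ℝ^{n+1} satisfy ⟨Λ, α⟩ ≠ 0 for all α ∈ Δ and ⟨Λ, α⟩ > 0 for all α ∈ Δ_c^+. Then there exists exactly one pair (m, ε) with 1 ≤ m ≤ n+1 and ε ∈ {+, −} such that ⟨Λ, β⟩ > 0 for all β ∈ Δ_{m,ε}^+. -/
/-- The standard inner product on `ℝ^{n+1}`. -/
def inn (n : ℕ) (v w : Fin (n + 1) → ℝ) : ℝ := ∑ i, v i * w i

lemma inn_ee (n : ℕ) (Lam : Fin (n+1) → ℝ) (i : Fin (n+1)) : inn n Lam (ee n i) = Lam i := by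
  simp [inn, ee, Pi.single_apply, mul_ite]

lemma inn_add (n : ℕ) (Lam v w : Fin (n+1) → ℝ) :
    inn n Lam (v + w) = inn n Lam v + inn n Lam w := by
  simp [inn, mul_add, Finset.sum_add_distrib]

lemma inn_neg (n : ℕ) (Lam v : Fin (n+1) → ℝ) : inn n Lam (-v) = -inn n Lam v := by
  simp [inn, Finset.sum_neg_distrib]

lemma inn_sub (n : ℕ) (Lam v w : Fin (n+1) → ℝ) :
    inn n Lam (v - w) = inn n Lam v - inn n Lam w := by
  simp [sub_eq_add_neg, inn_add, inn_neg]

lemma posP_iff (n m : ℕ) (Lam : Fin (n+1) → ℝ)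
    (hdom : ∀ α ∈ DeltaC n, 0 < inn n Lam α) :
    (∀ β ∈ DeltaP n m, 0 < inn n Lam β) ↔
      ((∀ i : Fin (n+1), (i:ℕ)+2 ≤ m → |Lam (Fin.last n)| < Lam i) ∧
       (∀ i : Fin (n+1), m ≤ (i:ℕ)+1 → (i:ℕ) < n → |Lam i| < Lam (Fin.last n))) := by
  constructor
  · intro h
    constructor
    · intro i hi
      have h1 := h _ (Or.inl (Or.inr ⟨i, hi, Or.inl rfl⟩))
      have h2 := h _ (Or.inl (Or.inr ⟨i, hi, Or.inr rfl⟩))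
      rw [inn_add, inn_ee, inn_ee] at h1
      rw [inn_sub, inn_ee, inn_ee] at h2
      rw [abs_lt]; constructor <;> linarith
    · intro i hi hi'
      have h1 := h _ (Or.inr ⟨i, hi, hi', Or.inl rfl⟩)
      have h2 := h _ (Or.inr ⟨i, hi, hi', Or.inr rfl⟩)
      rw [inn_add, inn_ee, inn_ee] at h1
      rw [inn_sub, inn_ee, inn_ee] at h2
      rw [abs_lt]; constructor <;> linarith
  · rintro ⟨hA, hB⟩ β hβ
    rcases hβ with (hc | ⟨i, hi, (rfl | rfl)⟩) | ⟨i, hi, hi', (rfl | rfl)⟩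
    · exact hdom _ hc
    · rw [inn_add, inn_ee, inn_ee]
      have := hA i hi; rw [abs_lt] at this; linarith [this.1]
    · rw [inn_sub, inn_ee, inn_ee]
      have := hA i hi; rw [abs_lt] at this; linarith [this.2]
    · rw [inn_add, inn_ee, inn_ee]
      have := hB i hi hi'; rw [abs_lt] at this; linarith [this.1]
    · rw [inn_sub, inn_ee, inn_ee]
      have := hB i hi hi'; rw [abs_lt] at this; linarith [this.2]

lemma posM_iff (n m : ℕ) (hm : m ≠ n + 1) (Lam : Fin (n+1) → ℝ)
    (hdom : ∀ α ∈ DeltaC n, 0 < inn n Lam α) :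
    (∀ β ∈ DeltaM n m, 0 < inn n Lam β) ↔
      ((∀ i : Fin (n+1), (i:ℕ)+2 ≤ m → |Lam (Fin.last n)| < Lam i) ∧
       (∀ i : Fin (n+1), m ≤ (i:ℕ)+1 → (i:ℕ) < n → |Lam i| < -Lam (Fin.last n))) := by
  rw [DeltaM, if_neg hm]
  constructor
  · intro h
    constructor
    · intro i hi
      have h1 := h _ (Or.inl (Or.inr ⟨i, hi, Or.inl rfl⟩))
      have h2 := h _ (Or.inl (Or.inr ⟨i, hi, Or.inr rfl⟩))
      rw [inn_add, inn_ee, inn_ee] at h1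
      rw [inn_sub, inn_ee, inn_ee] at h2
      rw [abs_lt]; constructor <;> linarith
    · intro i hi hi'
      have h1 := h _ (Or.inr ⟨i, hi, hi', Or.inl rfl⟩)
      have h2 := h _ (Or.inr ⟨i, hi, hi', Or.inr rfl⟩)
      rw [inn_add, inn_neg, inn_ee, inn_ee] at h1
      rw [inn_sub, inn_neg, inn_ee, inn_ee] at h2
      rw [abs_lt]; constructor <;> linarith
  · rintro ⟨hA, hB⟩ β hβ
    rcases hβ with (hc | ⟨i, hi, (rfl | rfl)⟩) | ⟨i, hi, hi', (rfl | rfl)⟩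
    · exact hdom _ hc
    · rw [inn_add, inn_ee, inn_ee]
      have := hA i hi; rw [abs_lt] at this; linarith [this.1]
    · rw [inn_sub, inn_ee, inn_ee]
      have := hA i hi; rw [abs_lt] at this; linarith [this.2]
    · rw [inn_add, inn_neg, inn_ee, inn_ee]
      have := hB i hi hi'; rw [abs_lt] at this; linarith [this.2]
    · rw [inn_sub, inn_neg, inn_ee, inn_ee]
      have := hB i hi hi'; rw [abs_lt] at this; linarith [this.1]

lemma posMtop_iff (n : ℕ) (Lam : Fin (n+1) → ℝ)
    (hdom : ∀ α ∈ DeltaC n, 0 < inn n Lam α) :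
    (∀ β ∈ DeltaM n (n+1), 0 < inn n Lam β) ↔
      ((∀ i : Fin (n+1), (i:ℕ)+2 ≤ n → |Lam (Fin.last n)| < Lam i) ∧
       |Lam (Fin.last n)| < -Lam ⟨n - 1, by omega⟩) := by
  rw [DeltaM, if_pos rfl]
  constructor
  · intro h
    constructor
    · intro i hi
      have h1 := h _ (Or.inl (Or.inr ⟨i, hi, Or.inl rfl⟩))
      have h2 := h _ (Or.inl (Or.inr ⟨i, hi, Or.inr rfl⟩))
      rw [inn_add, inn_ee, inn_ee] at h1
      rw [inn_sub, inn_ee, inn_ee] at h2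
      rw [abs_lt]; constructor <;> linarith
    · have h1 := h _ (Or.inr (Or.inl rfl))
      have h2 := h _ (Or.inr (Or.inr rfl))
      rw [inn_add, inn_neg, inn_ee, inn_ee] at h1
      rw [inn_sub, inn_neg, inn_ee, inn_ee] at h2
      rw [abs_lt]; constructor <;> linarith
  · rintro ⟨hA, hB⟩ β hβ
    rcases hβ with (hc | ⟨i, hi, (rfl | rfl)⟩) | (rfl | rfl)
    · exact hdom _ hc
    · rw [inn_add, inn_ee, inn_ee]
      have := hA i hi; rw [abs_lt] at this; linarith [this.1]
    · rw [inn_sub, inn_ee, inn_ee]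
      have := hA i hi; rw [abs_lt] at this; linarith [this.2]
    · rw [inn_add, inn_neg, inn_ee, inn_ee]
      rw [abs_lt] at hB; linarith [hB.2]
    · rw [inn_sub, inn_neg, inn_ee, inn_ee]
      rw [abs_lt] at hB; linarith [hB.1]

/-- If `Λ ∈ ℝ^{n+1}` is `Δ`-regular and dominant for `Δ_c⁺`, then there is exactly one
pair `(m, ε)` with `1 ≤ m ≤ n+1` and `ε ∈ {+,−}` (encoded by `Bool`: `true ↔ +`) such that
`⟨Λ, β⟩ > 0` for all `β ∈ Δ_{m,ε}⁺`. -/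
theorem stmt6 (n : ℕ) (hn : 2 ≤ n) (Lam : Fin (n + 1) → ℝ)
    (hreg : ∀ α ∈ Delta n, inn n Lam α ≠ 0)
    (hdom : ∀ α ∈ DeltaC n, 0 < inn n Lam α) :
    ∃! p : ℕ × Bool, 1 ≤ p.1 ∧ p.1 ≤ n + 1 ∧
      ∀ β ∈ (if p.2 then DeltaP n p.1 else DeltaM n p.1), 0 < inn n Lam β := by
  classical
  have pn1 : n - 1 < n + 1 := by omega
  have A : ∀ i j : Fin (n+1), i < j → (j:ℕ) < n → |Lam j| < Lam i := by
    intro i j hij hj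
    have h1 := hdom _ ⟨i, j, hij, hj, Or.inl rfl⟩
    have h2 := hdom _ ⟨i, j, hij, hj, Or.inr rfl⟩
    rw [inn_sub, inn_ee, inn_ee] at h1
    rw [inn_add, inn_ee, inn_ee] at h2
    rw [abs_lt]; constructor <;> linarith
  have B : ∀ i : Fin (n+1), (i:ℕ) < n → |Lam i| ≠ |Lam (Fin.last n)| := by
    intro i hi
    have hlt : i < Fin.last n := by rw [Fin.lt_def]; simpa using hi
    have h1 := hreg _ ⟨i, Fin.last n, hlt, Or.inl rfl⟩
    have h2 := hreg _ ⟨i, Fin.last n, hlt, Or.inr (Or.inl rfl)⟩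
    rw [inn_add, inn_ee, inn_ee] at h1
    rw [inn_sub, inn_ee, inn_ee] at h2
    rw [Ne, abs_eq_abs]
    push_neg
    exact ⟨fun h => h2 (by linarith), fun h => h1 (by linarith)⟩
  have habs : ∀ i : Fin (n+1), (i:ℕ)+1 < n → |Lam i| = Lam i := by
    intro i hi
    have h := A i ⟨n-1, pn1⟩ (by rw [Fin.lt_def]; show (i:ℕ) < n - 1; omega)
      (show n - 1 < n by omega)
    exact abs_of_pos (lt_of_le_of_lt (abs_nonneg _) h)
  set Q : ℕ → Prop := fun k =>
    k = n ∨ ∃ hk : k < n, |Lam ⟨k, Nat.lt_succ_of_lt hk⟩| < |Lam (Fin.last n)| with hQdef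
  have hQ : ∃ k, Q k := ⟨n, Or.inl rfl⟩
  set c := Nat.find hQ with hcdef
  have hcQ : Q c := Nat.find_spec hQ
  have hcle : c ≤ n := Nat.find_le (Or.inl rfl)
  have h1 : ∀ i : Fin (n+1), (i:ℕ) < c → |Lam (Fin.last n)| < |Lam i| := by
    intro i hi
    have hin : (i:ℕ) < n := lt_of_lt_of_le hi hcle
    have hnq := Nat.find_min hQ hi
    rw [hQdef] at hnq
    have h3 : ¬ (|Lam i| < |Lam (Fin.last n)|) := fun hlt => hnq (Or.inr ⟨hin, hlt⟩)
    rcases (B i hin).lt_or_gt with h | h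
    · exact absurd h h3
    · exact h
  have h2 : ∀ i : Fin (n+1), c ≤ (i:ℕ) → (i:ℕ) < n → |Lam i| < |Lam (Fin.last n)| := by
    intro i hci hin
    have hcn : c < n := lt_of_le_of_lt hci hin
    have hq := hcQ
    rw [hQdef] at hq
    rcases hq with h | ⟨hk, hlt⟩
    · omega
    · rcases eq_or_lt_of_le hci with he | hlt2
      · have hei : i = ⟨c, Nat.lt_succ_of_lt hk⟩ := Fin.ext he.symm
        rw [hei]; exact hlt
      · have hA := A ⟨c, Nat.lt_succ_of_lt hk⟩ i (by rw [Fin.lt_def]; exact hlt2) hin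
        have hle := le_abs_self (Lam (⟨c, Nat.lt_succ_of_lt hk⟩ : Fin (n+1)))
        linarith
  set E : Bool := if c = n then decide (0 < Lam (⟨n-1, pn1⟩ : Fin (n+1)))
    else decide (0 < Lam (Fin.last n)) with hEdef
  refine ⟨(c+1, E), ⟨show 1 ≤ c+1 by omega, show c+1 ≤ n+1 by omega, ?_⟩, ?_⟩
  · show ∀ β ∈ (if E then DeltaP n (c+1) else DeltaM n (c+1)), 0 < inn n Lam β
    by_cases hcn : c = n
    · by_cases hsg : 0 < Lam (⟨n-1, pn1⟩ : Fin (n+1))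
      · have hE : E = true := by rw [hEdef, if_pos hcn, decide_eq_true hsg]
        rw [hE, if_pos rfl, posP_iff n (c+1) Lam hdom]
        constructor
        · intro i hi
          by_cases hi2 : (i:ℕ)+1 < n
          · rw [← habs i hi2]; exact h1 i (by omega)
          · have hei : i = ⟨n-1, pn1⟩ := Fin.ext (by show (i:ℕ) = n - 1; omega)
            rw [hei, ← abs_of_pos hsg]
            exact h1 _ (show n - 1 < c by omega)
        · intro i hi hin
          omega
      · have hE : E = false := by rw [hEdef, if_pos hcn, decide_eq_false hsg]
        rw [hE, if_neg Bool.false_ne_true, show c + 1 = n + 1 by omega,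
          posMtop_iff n Lam hdom]
        constructor
        · intro i hi
          rw [← habs i (by omega)]
          exact h1 i (by omega)
        · have hh := h1 ⟨n-1, pn1⟩ (show n - 1 < c by omega)
          have : |Lam (⟨n-1, pn1⟩ : Fin (n+1))| = -Lam (⟨n-1, pn1⟩ : Fin (n+1)) :=
            abs_of_nonpos (not_lt.1 hsg)
          rw [this] at hh
          exact hh
    · have hck : c < n := by omega
      have hq := hcQ
      rw [hQdef] at hq
      rcases hq with h | ⟨hk, hlt⟩
      · omega
      · have htpos : 0 < |Lam (Fin.last n)| := lt_of_le_of_lt (abs_nonneg _) hlt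
        by_cases hsg : 0 < Lam (Fin.last n)
        · have hE : E = true := by rw [hEdef, if_neg hcn, decide_eq_true hsg]
          rw [hE, if_pos rfl, posP_iff n (c+1) Lam hdom]
          constructor
          · intro i hi
            rw [← habs i (by omega)]
            exact h1 i (by omega)
          · intro i hi hin
            have := h2 i (by omega) hin
            rwa [abs_of_pos hsg] at this
        · have hE : E = false := by rw [hEdef, if_neg hcn, decide_eq_false hsg]
          rw [hE, if_neg Bool.false_ne_true,
            posM_iff n (c+1) (by omega) Lam hdom]
          have htneg : Lam (Fin.last n) < 0 := by
            rcases lt_trichotomy (Lam (Fin.last n)) 0 with h | h | h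
            · exact h
            · rw [h] at htpos; simp at htpos
            · exact absurd h hsg
          constructor
          · intro i hi
            rw [← habs i (by omega)]
            exact h1 i (by omega)
          · intro i hi hin
            have := h2 i (by omega) hin
            rwa [abs_of_neg htneg] at this
  · rintro ⟨m', b⟩ ⟨hm1, hm2, hprop⟩
    have hm1' : 1 ≤ m' := hm1
    have hm2' : m' ≤ n + 1 := hm2
    rw [Prod.mk.injEq]
    cases b with
    | true =>
      have hp : ∀ β ∈ DeltaP n m', 0 < inn n Lam β := hprop
      rw [posP_iff n m' Lam hdom] at hp
      obtain ⟨C1, C2⟩ := hp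
      by_cases hm : m' = n + 1
      · subst hm
        have hc : c = n := by
          rw [hcdef, Nat.find_eq_iff hQ]
          refine ⟨Or.inl rfl, ?_⟩
          intro k hk hQk
          rcases hQk with h | ⟨hkn, hlt⟩
          · omega
          · have h5 := C1 ⟨k, Nat.lt_succ_of_lt hkn⟩ (show k + 2 ≤ n + 1 by omega)
            have h6 := le_abs_self (Lam (⟨k, Nat.lt_succ_of_lt hkn⟩ : Fin (n+1)))
            linarith
        have hsg : 0 < Lam (⟨n-1, pn1⟩ : Fin (n+1)) := by
          have h5 := C1 ⟨n-1, pn1⟩ (show n - 1 + 2 ≤ n + 1 by omega)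
          have := abs_nonneg (Lam (Fin.last n))
          linarith
        have hE : E = true := by rw [hEdef, if_pos hc, decide_eq_true hsg]
        exact ⟨by omega, hE.symm⟩
      · have key := C2 ⟨m'-1, by omega⟩ (show m' ≤ (m'-1)+1 by omega)
          (show m' - 1 < n by omega)
        have htpos : 0 < Lam (Fin.last n) := lt_of_le_of_lt (abs_nonneg _) key
        have h9 : m' - 1 < n := by omega
        have hc : c = m' - 1 := by
          rw [hcdef, Nat.find_eq_iff hQ]
          constructor
          · refine Or.inr ⟨h9, ?_⟩
            have key' : |Lam (⟨m'-1, Nat.lt_succ_of_lt h9⟩ : Fin (n+1))|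
                < Lam (Fin.last n) := key
            exact lt_of_lt_of_le key' (le_abs_self _)
          · intro k hk hQk
            rcases hQk with h | ⟨hkn, hlt⟩
            · omega
            · have h5 := C1 ⟨k, Nat.lt_succ_of_lt hkn⟩ (show k + 2 ≤ m' by omega)
              have h6 := le_abs_self (Lam (⟨k, Nat.lt_succ_of_lt hkn⟩ : Fin (n+1)))
              linarith
        have hE : E = true := by
          rw [hEdef, if_neg (by omega), decide_eq_true htpos]
        exact ⟨by omega, hE.symm⟩
    | false =>
      have hp : ∀ β ∈ DeltaM n m', 0 < inn n Lam β := hprop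
      by_cases hm : m' = n + 1
      · subst hm
        rw [posMtop_iff n Lam hdom] at hp
        obtain ⟨C1, C2⟩ := hp
        have C2' : |Lam (Fin.last n)| < -Lam (⟨n-1, pn1⟩ : Fin (n+1)) := C2
        have hc : c = n := by
          rw [hcdef, Nat.find_eq_iff hQ]
          refine ⟨Or.inl rfl, ?_⟩
          intro k hk hQk
          rcases hQk with h | ⟨hkn, hlt⟩
          · omega
          · by_cases hk2 : k + 1 < n
            · have h5 := C1 ⟨k, Nat.lt_succ_of_lt hkn⟩ (show k + 2 ≤ n by omega)
              have h6 := le_abs_self (Lam (⟨k, Nat.lt_succ_of_lt hkn⟩ : Fin (n+1)))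
              linarith
            · have hei : (⟨k, Nat.lt_succ_of_lt hkn⟩ : Fin (n+1)) = ⟨n-1, pn1⟩ :=
                Fin.ext (by show k = n - 1; omega)
              rw [hei] at hlt
              have h6 := neg_le_abs (Lam (⟨n-1, pn1⟩ : Fin (n+1)))
              linarith
        have hsg : ¬ 0 < Lam (⟨n-1, pn1⟩ : Fin (n+1)) := by
          have := abs_nonneg (Lam (Fin.last n))
          intro h; linarith
        have hE : E = false := by rw [hEdef, if_pos hc, decide_eq_false hsg]
        exact ⟨by omega, hE.symm⟩
      · rw [posM_iff n m' hm Lam hdom] at hp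
        obtain ⟨C1, C2⟩ := hp
        have key := C2 ⟨m'-1, by omega⟩ (show m' ≤ (m'-1)+1 by omega)
          (show m' - 1 < n by omega)
        have htneg : 0 < -Lam (Fin.last n) := lt_of_le_of_lt (abs_nonneg _) key
        have hsg : ¬ 0 < Lam (Fin.last n) := by intro h; linarith
        have h9 : m' - 1 < n := by omega
        have hc : c = m' - 1 := by
          rw [hcdef, Nat.find_eq_iff hQ]
          constructor
          · refine Or.inr ⟨h9, ?_⟩
            have key' : |Lam (⟨m'-1, Nat.lt_succ_of_lt h9⟩ : Fin (n+1))|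
                < -Lam (Fin.last n) := key
            exact lt_of_lt_of_le key' (neg_le_abs _)
          · intro k hk hQk
            rcases hQk with h | ⟨hkn, hlt⟩
            · omega
            · have h5 := C1 ⟨k, Nat.lt_succ_of_lt hkn⟩ (show k + 2 ≤ m' by omega)
              have h6 := le_abs_self (Lam (⟨k, Nat.lt_succ_of_lt hkn⟩ : Fin (n+1)))
              linarith
        have hE : E = false := by
          rw [hEdef, if_neg (by omega), decide_eq_false hsg]
        exact ⟨by omega, hE.symm⟩
end
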